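/- arXiv:0707.4633 — 9 statements merged into one kernel-verified Lean document; each statement's English description precedes it below -/
import Mathlib

section
/- The number of permutations of {1,...,n} that avoid the classical pattern 2-1-3 and avoid the barred pattern 2̄-31 (i.e., every descent π_i > π_{i+1} has some j < i with π_{i+1} < π_j < π_i) equals the (n-1)-st Motzkin number M_{n-1}. -/
/-- Motzkin numbers: `M 0 = 1`, `M (n+1) = M n + ∑_{k=0}^{n-1} M k * M (n-1-k)`. -/
def motzkin : ℕ → ℕ
  | 0 => 1
  | n + 1 => motzkin n + ∑ k ∈ (Finset.range n).attach,
      motzkin k.1 * motzkin (n - 1 - k.1)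
decreasing_by
  all_goals (try exact Nat.lt_succ_self n)
  all_goals (have := Finset.mem_range.mp k.2; omega)

/-- `π` contains the classical pattern 2-1-3: indices `i < j < k` with `π j < π i < π k`. -/
def Contains213 {n : ℕ} (π : Equiv.Perm (Fin n)) : Prop :=
  ∃ i j k : Fin n, i < j ∧ j < k ∧ π j < π i ∧ π i < π k

/-- `π` avoids the barred pattern 2̄-31: every descent `π i > π (i+1)` has some `j < i`
with `π (i+1) < π j < π i`. -/
def AvoidsBarred231 {n : ℕ} (π : Equiv.Perm (Fin n)) : Prop :=
  ∀ i i' : Fin n, (i' : ℕ) = (i : ℕ) + 1 → π i' < π i →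
    ∃ j : Fin n, j < i ∧ π i' < π j ∧ π j < π i


/-!
Look at the first letter `b = π 0` of an avoider `π` of length `n ≥ 2`. Avoiding 213 with
`π 0` in the role of the `2` forces every value above `b` to come before every value below `b`,
so in one-line notation `π = b, (b + 1 + A), B` for permutations `A` of length `a` and `B` of
length `n - 1 - a`. The barred condition at the first descent forces `a > 0`, and, because every
descent inside `A` or `B` needs a witness from its own block while the descent between the blocks
is witnessed by `b`, `π` is an avoider iff `A` and `B` are. Hence the numbers `c n` of avoiders
satisfy `c (m + 2) = ∑_{b ≤ m} c (m + 1 - b) * c b` with `c 0 = c 1 = 1`, which is the Motzkin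
recurrence for `c (m + 1) = M m`.
-/

open Equiv Finset

lemma Nat.card_eq_sum_range_card_fiber {ι : Type*} [Finite ι] (P : ι → Prop) {f : ι → ℕ}
    {k : ℕ} (hf : ∀ x, f x < k) :
    Nat.card {x // P x} = ∑ y ∈ range k, Nat.card {x // P x ∧ f x = y} := by
  classical
  have := Fintype.ofFinite ι
  simp only [Nat.card_eq_fintype_card, Fintype.card_subtype]
  rw [card_eq_sum_card_fiberwise (f := f) (t := range k) fun x _ => by simpa using hf x]
  simp [filter_filter]

lemma Finset.mem_iff_lt_card_of_isLowerSet {m : ℕ} {s : Finset (Fin m)}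
    (hs : IsLowerSet (s : Set (Fin m))) (p : Fin m) : p ∈ s ↔ (p : ℕ) < #s := by
  constructor
  · intro hp
    have := card_le_card fun q hq => hs (mem_Iic.1 hq) hp
    rw [Fin.card_Iic] at this
    omega
  · intro hp
    by_contra hn
    have := card_le_card fun q hq => mem_Iio.2 (lt_of_not_ge fun hpq => hn (hs hpq hq))
    rw [Fin.card_Iio] at this
    omega

lemma Equiv.Perm.card_filter_le_apply {m : ℕ} (π : Perm (Fin m)) (x : Fin m) :
    #{p | x ≤ π p} = m - x := by
  have : ({p | x ≤ π p} : Finset (Fin m)) = (Ici x).map π.symm.toEmbedding := by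
    ext p
    simp
  rw [this, card_map, Fin.card_Ici]

section Sequences
variable {α : Type*} [LinearOrder α] {n m a b : ℕ}

def Contains213Seq (w : Fin n → α) : Prop :=
  ∃ i j k, i < j ∧ j < k ∧ w j < w i ∧ w i < w k

def AvoidsBarred231Seq (w : Fin n → α) : Prop :=
  ∀ i i' : Fin n, (i' : ℕ) = i + 1 → w i' < w i → ∃ j, j < i ∧ w i' < w j ∧ w j < w i

lemma contains213_iff_seq (π : Perm (Fin n)) : Contains213 π ↔ Contains213Seq ⇑π := Iff.rfl

lemma avoidsBarred231_iff_seq (π : Perm (Fin n)) :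
    AvoidsBarred231 π ↔ AvoidsBarred231Seq ⇑π := Iff.rfl

lemma Contains213Seq.of_comp {w : Fin n → α} {f : Fin m → Fin n} (hf : StrictMono f) :
    Contains213Seq (w ∘ f) → Contains213Seq w
  | ⟨i, j, k, hij, hjk, h₁, h₂⟩ => ⟨f i, f j, f k, hf hij, hf hjk, h₁, h₂⟩

lemma contains213Seq_comp_iff {β : Type*} [LinearOrder β] {g : α → β} (hg : StrictMono g)
    {w : Fin n → α} : Contains213Seq (g ∘ w) ↔ Contains213Seq w := by
  simp only [Contains213Seq, Function.comp_apply, hg.lt_iff_lt]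

lemma avoidsBarred231Seq_comp_iff {β : Type*} [LinearOrder β] {g : α → β} (hg : StrictMono g)
    {w : Fin n → α} : AvoidsBarred231Seq (g ∘ w) ↔ AvoidsBarred231Seq w := by
  simp only [AvoidsBarred231Seq, Function.comp_apply, hg.lt_iff_lt]

lemma contains213Seq_cons_iff {x : α} {w : Fin n → α} :
    Contains213Seq (Fin.cons x w : Fin (n + 1) → α) ↔
      Contains213Seq w ∨ ∃ j k, j < k ∧ w j < x ∧ x < w k := by
  constructor
  · rintro ⟨i, j, k, hij, hjk, hji, hik⟩
    obtain ⟨j, rfl⟩ := Fin.exists_succ_eq.2 (Fin.ne_zero_of_lt hij)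
    obtain ⟨k, rfl⟩ := Fin.exists_succ_eq.2 (Fin.ne_zero_of_lt hjk)
    rw [Fin.succ_lt_succ_iff] at hjk
    cases i using Fin.cases with
    | zero => exact Or.inr ⟨j, k, hjk, hji, hik⟩
    | succ i => exact Or.inl ⟨i, j, k, Fin.succ_lt_succ_iff.1 hij, hjk, hji, hik⟩
  · rintro (h | ⟨j, k, hjk, hj, hk⟩)
    · exact h.of_comp Fin.strictMono_succ
    · exact ⟨0, j.succ, k.succ, Fin.succ_pos _, Fin.succ_lt_succ_iff.2 hjk, hj, hk⟩

lemma contains213Seq_append_iff {u : Fin a → α} {v : Fin b → α} (huv : ∀ i j, v j < u i) :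
    Contains213Seq (Fin.append u v) ↔ Contains213Seq u ∨ Contains213Seq v := by
  constructor
  · rintro ⟨i, j, k, hij, hjk, hji, hik⟩
    induction i using Fin.addCases <;> induction j using Fin.addCases <;>
      induction k using Fin.addCases <;>
      simp only [Fin.append_left, Fin.append_right, Fin.lt_def, Fin.val_castAdd,
        Fin.val_natAdd] at *
    all_goals first
      | exact absurd hik (huv _ _).not_gt
      | omega
      | exact Or.inl ⟨_, _, _, Fin.lt_def.2 hij, Fin.lt_def.2 hjk, hji, hik⟩
      | exact Or.inr ⟨_, _, _, Fin.lt_def.2 (by omega), Fin.lt_def.2 (by omega), hji, hik⟩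
  · rintro (h | h)
    · exact .of_comp (Fin.strictMono_castAdd b) (by simpa [Function.comp_def] using h)
    · exact .of_comp (Fin.strictMono_natAdd a) (by simpa [Function.comp_def] using h)

variable {x : α} {u : Fin a → α} {v : Fin b → α}

lemma contains213Seq_cons_append_iff (hu : ∀ i, x < u i) (hv : ∀ j, v j < x) :
    Contains213Seq (Fin.cons x (Fin.append u v) : Fin (a + b + 1) → α) ↔
      Contains213Seq u ∨ Contains213Seq v := by
  rw [contains213Seq_cons_iff, contains213Seq_append_iff fun i j => (hv j).trans (hu i),
    or_iff_left]
  rintro ⟨j, k, hjk, hj, hk⟩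
  induction j using Fin.addCases with
  | left j => exact (hu j).not_gt (by simpa using hj)
  | right j =>
    induction k using Fin.addCases with
    | left k => simp [Fin.lt_def] at hjk; omega
    | right k => exact (hv k).not_gt (by simpa using hk)

lemma AvoidsBarred231Seq.of_cons_append (hu : ∀ i, x < u i) (hv : ∀ j, v j < x)
    (H : AvoidsBarred231Seq (Fin.cons x (Fin.append u v) : Fin (a + b + 1) → α)) :
    AvoidsBarred231Seq u ∧ AvoidsBarred231Seq v := by
  constructor
  · intro i i' hi' hdesc
    obtain ⟨j, hj, hj₁, hj₂⟩ :=
      H (Fin.castAdd b i).succ (Fin.castAdd b i').succ (by simp [hi']) (by simpa using hdesc)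
    cases j using Fin.cases with
    | zero => exact absurd hj₁ (by simpa using (hu i').le)
    | succ j =>
      induction j using Fin.addCases with
      | left j =>
        exact ⟨j, (Fin.strictMono_castAdd b).lt_iff_lt.1 (Fin.succ_lt_succ_iff.1 hj),
          by simpa using hj₁, by simpa using hj₂⟩
      | right j =>
        rw [Fin.succ_lt_succ_iff, Fin.lt_def, Fin.val_natAdd, Fin.val_castAdd] at hj
        omega
  · intro i i' hi' hdesc
    obtain ⟨j, hj, hj₁, hj₂⟩ := H (Fin.natAdd a i).succ (Fin.natAdd a i').succ
      (by simp [hi']; omega) (by simpa using hdesc)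
    cases j using Fin.cases with
    | zero => exact absurd hj₂ (by simpa using (hv i).le)
    | succ j =>
      induction j using Fin.addCases with
      | left j => exact absurd hj₂ (by simpa using ((hv i).trans (hu j)).le)
      | right j => exact ⟨j, by simpa using hj, by simpa using hj₁, by simpa using hj₂⟩

lemma AvoidsBarred231Seq.cons_append (ha : 0 < a) (hu : ∀ i, x < u i) (hv : ∀ j, v j < x)
    (Hu : AvoidsBarred231Seq u) (Hv : AvoidsBarred231Seq v) :
    AvoidsBarred231Seq (Fin.cons x (Fin.append u v) : Fin (a + b + 1) → α) := by
  intro i i' hi' hdesc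
  obtain ⟨i', rfl⟩ := Fin.exists_succ_eq.2 (show i' ≠ 0 by rintro rfl; simp at hi')
  cases i using Fin.cases with
  | zero =>
    induction i' using Fin.addCases with
    | left p => exact absurd hdesc (by simpa using (hu p).le)
    | right q => simp at hi'; omega
  | succ i =>
    simp only [Fin.val_succ, add_left_inj] at hi'
    induction i using Fin.addCases <;> induction i' using Fin.addCases <;>
      simp only [Fin.cons_succ, Fin.append_left, Fin.append_right, Fin.val_castAdd,
        Fin.val_natAdd] at hi' hdesc
    case left.left p p' =>
      obtain ⟨j, hj, hj₁, hj₂⟩ := Hu p p' hi' hdesc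
      exact ⟨(Fin.castAdd b j).succ, Fin.succ_lt_succ_iff.2 (Fin.strictMono_castAdd b hj),
        by simpa using hj₁, by simpa using hj₂⟩
    case left.right p q => exact ⟨0, Fin.succ_pos _, by simpa using hv q, by simpa using hu p⟩
    case right.left q p => omega
    case right.right q q' =>
      obtain ⟨j, hj, hj₁, hj₂⟩ := Hv q q' (by omega) hdesc
      exact ⟨(Fin.natAdd a j).succ, Fin.succ_lt_succ_iff.2 (Fin.strictMono_natAdd a hj),
        by simpa using hj₁, by simpa using hj₂⟩

lemma avoidsBarred231Seq_cons_append_iff (ha : 0 < a) (hu : ∀ i, x < u i) (hv : ∀ j, v j < x) :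
    AvoidsBarred231Seq (Fin.cons x (Fin.append u v) : Fin (a + b + 1) → α) ↔
      AvoidsBarred231Seq u ∧ AvoidsBarred231Seq v :=
  ⟨AvoidsBarred231Seq.of_cons_append hu hv,
    fun ⟨Hu, Hv⟩ => AvoidsBarred231Seq.cons_append ha hu hv Hu Hv⟩

lemma injective_cons_append (hu' : Function.Injective u) (hv' : Function.Injective v)
    (hu : ∀ i, x < u i) (hv : ∀ j, v j < x) :
    Function.Injective (Fin.cons x (Fin.append u v) : Fin (a + b + 1) → α) := by
  refine Fin.cons_injective_iff.2 ⟨?_, Fin.append_injective_iff.2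
    ⟨hu', hv', fun i j => ((hv j).trans (hu i)).ne'⟩⟩
  rintro ⟨k, hk⟩
  induction k using Fin.addCases with
  | left i => exact (hu i).ne' (by simpa using hk)
  | right j => exact (hv j).ne (by simpa using hk)

end Sequences

def Avoids213Barred231 {n : ℕ} (π : Perm (Fin n)) : Prop :=
  ¬ Contains213 π ∧ AvoidsBarred231 π

noncomputable def avoiderCount (n : ℕ) : ℕ :=
  Nat.card {π : Perm (Fin n) // Avoids213Barred231 π}

lemma apply_zero_le_iff_of_not_contains213 {n : ℕ} {π : Perm (Fin (n + 1))}
    (h : ¬ Contains213 π) (p : Fin (n + 1)) : π 0 ≤ π p ↔ (p : ℕ) < n + 1 - π 0 := by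
  have hlower : IsLowerSet (({p | π 0 ≤ π p} : Finset (Fin (n + 1))) : Set (Fin (n + 1))) := by
    intro r q hqr hr
    simp only [coe_filter, mem_univ, true_and, Set.mem_ofPred_eq] at hr ⊢
    by_contra! hq
    have hq0 : 0 < q := pos_of_ne_zero (by rintro rfl; exact hq.false)
    have hr0 : π 0 < π r := hr.lt_of_ne (π.injective.ne (hq0.trans_le hqr).ne)
    exact h ⟨0, q, r, hq0, hqr.lt_of_ne (by rintro rfl; exact hq.not_gt hr0), hq, hr0⟩
  rw [← π.card_filter_le_apply, ← mem_iff_lt_card_of_isLowerSet hlower, mem_filter]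
  simp

lemma AvoidsBarred231.apply_zero_lt_apply_one {m : ℕ} {π : Perm (Fin (m + 2))}
    (h : AvoidsBarred231 π) : π 0 < π 1 := by
  by_contra! h'
  obtain ⟨j, hj, -⟩ := h 0 1 (by simp) (h'.lt_of_ne (π.injective.ne zero_ne_one).symm)
  exact Fin.not_lt_zero j hj

section Glue
variable {a b : ℕ} {A A' : Perm (Fin a)} {B B' : Perm (Fin b)}

def raiseAbove (b : ℕ) (i : Fin a) : Fin (a + b + 1) := ⟨b + 1 + i, by omega⟩

lemma strictMono_raiseAbove : StrictMono (raiseAbove (a := a) b) :=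
  fun _ _ h => Fin.mk_lt_mk.2 (by omega)

lemma mk_lt_raiseAbove (i : Fin a) : (⟨b, by omega⟩ : Fin (a + b + 1)) < raiseAbove b i :=
  Fin.mk_lt_mk.2 (by omega)

lemma castLE_lt_mk (j : Fin b) : Fin.castLE (by omega) j < (⟨b, by omega⟩ : Fin (a + b + 1)) :=
  Fin.mk_lt_mk.2 j.isLt

/-- In one-line notation, `glue A B = b, (b + 1 + A), B`. -/
noncomputable def glue (A : Perm (Fin a)) (B : Perm (Fin b)) : Perm (Fin (a + b + 1)) :=
  Equiv.ofBijective _ (injective_cons_append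
    (strictMono_raiseAbove.injective.comp A.injective)
    ((Fin.strictMono_castLE _).injective.comp B.injective)
    (fun i => mk_lt_raiseAbove (A i)) (fun j => castLE_lt_mk (B j))).bijective_of_finite

lemma coe_glue : ⇑(glue A B) =
    Fin.cons ⟨b, by omega⟩ (Fin.append (raiseAbove b ∘ A) (Fin.castLE (by omega) ∘ B)) :=
  rfl

@[simp]
lemma glue_apply_zero : glue A B 0 = ⟨b, by omega⟩ := rfl

@[simp]
lemma glue_apply_succ_castAdd (i : Fin a) :
    glue A B (Fin.castAdd b i).succ = raiseAbove b (A i) := by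
  simp [coe_glue]

@[simp]
lemma glue_apply_succ_natAdd (j : Fin b) :
    glue A B (Fin.natAdd a j).succ = Fin.castLE (by omega) (B j) := by
  simp [coe_glue]

lemma glue_inj : glue A B = glue A' B' ↔ A = A' ∧ B = B' := by
  refine ⟨fun h => ⟨Equiv.ext fun i => ?_, Equiv.ext fun j => ?_⟩,
    fun ⟨hA, hB⟩ => hA ▸ hB ▸ rfl⟩
  · simpa [raiseAbove, Fin.ext_iff] using DFunLike.congr_fun h (Fin.castAdd b i).succ
  · simpa [Fin.ext_iff] using DFunLike.congr_fun h (Fin.natAdd a j).succ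

lemma avoids213Barred231_glue_iff (ha : 0 < a) :
    Avoids213Barred231 (glue A B) ↔ Avoids213Barred231 A ∧ Avoids213Barred231 B := by
  have hu (i : Fin a) : (⟨b, by omega⟩ : Fin (a + b + 1)) < (raiseAbove b ∘ A) i :=
    mk_lt_raiseAbove (A i)
  have hv (j : Fin b) : (Fin.castLE (by omega) ∘ B) j < (⟨b, by omega⟩ : Fin (a + b + 1)) :=
    castLE_lt_mk (B j)
  unfold Avoids213Barred231
  rw [contains213_iff_seq, avoidsBarred231_iff_seq, coe_glue,
    contains213Seq_cons_append_iff hu hv, avoidsBarred231Seq_cons_append_iff ha hu hv,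
    contains213Seq_comp_iff strictMono_raiseAbove,
    avoidsBarred231Seq_comp_iff strictMono_raiseAbove,
    contains213Seq_comp_iff (Fin.strictMono_castLE _),
    avoidsBarred231Seq_comp_iff (Fin.strictMono_castLE _)]
  tauto

lemma exists_glue_eq (π : Perm (Fin (a + b + 1))) (h : ¬ Contains213 π) (h0 : (π 0 : ℕ) = b) :
    ∃ A B, glue A B = π := by
  have hblock (p : Fin (a + b + 1)) : b ≤ π p ↔ (p : ℕ) ≤ a := by
    have := apply_zero_le_iff_of_not_contains213 h p
    rw [Fin.le_def, h0] at this
    omega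
  have hA (i : Fin a) : b + 1 ≤ π (Fin.castAdd b i).succ := by
    have := (hblock (Fin.castAdd b i).succ).2 (by simp)
    have : (π (Fin.castAdd b i).succ : ℕ) ≠ b := fun hb =>
      Fin.succ_ne_zero _ (π.injective (Fin.ext (hb.trans h0.symm)))
    omega
  have hB (j : Fin b) : (π (Fin.natAdd a j).succ : ℕ) < b := by
    have := mt (hblock (Fin.natAdd a j).succ).1 (by simp)
    omega
  let A : Fin a → Fin a :=
    fun i => ⟨π (Fin.castAdd b i).succ - (b + 1), by have := i.isLt; omega⟩
  let B : Fin b → Fin b := fun j => ⟨π (Fin.natAdd a j).succ, hB j⟩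
  have hAinj : Function.Injective A := fun i i' hii' => by
    have := hA i
    have := hA i'
    refine (Fin.strictMono_castAdd b).injective (Fin.succ_injective _ (π.injective (Fin.ext ?_)))
    simp only [A, Fin.ext_iff] at hii'
    omega
  have hBinj : Function.Injective B := fun j j' hjj' =>
    (Fin.strictMono_natAdd a).injective
      (Fin.succ_injective _ (π.injective (Fin.ext (by simpa [B, Fin.ext_iff] using hjj'))))
  refine ⟨Equiv.ofBijective A hAinj.bijective_of_finite,
    Equiv.ofBijective B hBinj.bijective_of_finite, Equiv.ext fun p => ?_⟩
  cases p using Fin.cases with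
  | zero => exact Fin.ext h0.symm
  | succ p =>
    induction p using Fin.addCases with
    | left i =>
      have := hA i
      ext
      simp only [glue_apply_succ_castAdd, raiseAbove, ofBijective_apply, A]
      omega
    | right j => ext; simp [B]

end Glue

lemma card_avoiders_apply_zero_eq {m b : ℕ} (hb : b < m) :
    Nat.card {π : Perm (Fin (m + 1)) // Avoids213Barred231 π ∧ (π 0 : ℕ) = b} =
      avoiderCount (m - b) * avoiderCount b := by
  obtain ⟨a, rfl⟩ : ∃ a, m = a + b := ⟨m - b, by omega⟩
  have ha : 0 < a := by omega
  rw [Nat.add_sub_cancel, avoiderCount, avoiderCount, ← Nat.card_prod]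
  symm
  refine Nat.card_congr (Equiv.ofBijective (fun AB =>
    ⟨glue AB.1.1 AB.2.1, (avoids213Barred231_glue_iff ha).2 ⟨AB.1.2, AB.2.2⟩, rfl⟩) ⟨?_, ?_⟩)
  · rintro ⟨⟨A, _⟩, ⟨B, _⟩⟩ ⟨⟨A', _⟩, ⟨B', _⟩⟩ h
    obtain ⟨rfl, rfl⟩ := glue_inj.1 (congrArg Subtype.val h)
    rfl
  · rintro ⟨π, hπ, h0⟩
    obtain ⟨A, B, rfl⟩ := exists_glue_eq π hπ.1 h0
    obtain ⟨hA, hB⟩ := (avoids213Barred231_glue_iff ha).1 hπ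
    exact ⟨(⟨A, hA⟩, ⟨B, hB⟩), rfl⟩

lemma avoiderCount_add_two (m : ℕ) :
    avoiderCount (m + 2) = ∑ b ∈ range (m + 1), avoiderCount (m + 1 - b) * avoiderCount b := by
  rw [avoiderCount,
    Nat.card_eq_sum_range_card_fiber _ (fun π : Perm (Fin (m + 2)) => (π 0).isLt), sum_range_succ]
  have hlast : Nat.card {π : Perm (Fin (m + 2)) //
      Avoids213Barred231 π ∧ (π 0 : ℕ) = m + 1} = 0 := by
    refine @Nat.card_of_isEmpty _ ⟨fun ⟨π, hπ, h0⟩ => ?_⟩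
    have := hπ.2.apply_zero_lt_apply_one
    have := (π 1).isLt
    rw [Fin.lt_def] at *
    omega
  rw [hlast, add_zero]
  exact sum_congr rfl fun b hb => card_avoiders_apply_zero_eq (mem_range.1 hb)

lemma avoiderCount_of_le_one {n : ℕ} (hn : n ≤ 1) : avoiderCount n = 1 := by
  have hall (π : Perm (Fin n)) : Avoids213Barred231 π :=
    ⟨fun ⟨i, j, k, hij, hjk, _⟩ => by omega, fun i i' h _ => by omega⟩
  rw [avoiderCount, Nat.card_congr (Equiv.subtypeUnivEquiv hall), Nat.card_perm, Nat.card_fin]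
  interval_cases n <;> rfl

lemma motzkin_succ (m : ℕ) :
    motzkin (m + 1) = motzkin m + ∑ k ∈ range m, motzkin k * motzkin (m - 1 - k) := by
  rw [motzkin]
  exact congrArg _ (sum_attach (range m) fun k => motzkin k * motzkin (m - 1 - k))

lemma avoiderCount_succ (m : ℕ) : avoiderCount (m + 1) = motzkin m := by
  induction m using Nat.strong_induction_on with
  | _ m ih =>
    cases m with
    | zero => rw [avoiderCount_of_le_one le_rfl, motzkin]
    | succ m =>
      rw [avoiderCount_add_two, sum_range_succ', motzkin_succ, Nat.sub_zero, ih m (by omega),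
        avoiderCount_of_le_one zero_le_one, mul_one, add_comm]
      congr 1
      refine sum_congr rfl fun k hk => ?_
      have hk := mem_range.1 hk
      rw [show m + 1 - (k + 1) = m - 1 - k + 1 by omega, ih _ (by omega), ih k (by omega),
        mul_comm]

theorem stmt0 (n : ℕ) (hn : 1 ≤ n) :
    Nat.card {π : Equiv.Perm (Fin n) // ¬ Contains213 π ∧ AvoidsBarred231 π}
      = motzkin (n - 1) := by
  obtain ⟨m, rfl⟩ := Nat.exists_eq_add_of_le' hn
  exact avoiderCount_succ m
end

section
/- Avoiding the classical pattern 2-1-3 is equivalent to avoiding the generalized pattern 2-13: a permutation π ∈ S_n contains indices i < j < k with π_j < π_i < π_k if and only if it contains indices i < ℓ < ℓ+1 with π_ℓ < π_i < π_{ℓ+1}. -/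
/-!
Given a 2-1-3 occurrence `f j < f i < f k` with `i < j < k`, walk from `j` towards `k`: the
values start below `f i` and end above it, so some adjacent pair `l, l + 1` in between steps
from below `f i` to not below it; as `l + 1 > i` and `f` is injective, `f (l + 1) > f i`,
which is an occurrence of 2-13.
-/

theorem Nat.exists_le_lt_and_not_succ {p : ℕ → Prop} {j k : ℕ} (hjk : j ≤ k) (hj : p j)
    (hk : ¬ p k) : ∃ l, j ≤ l ∧ l < k ∧ p l ∧ ¬ p (l + 1) := by
  by_contra! h
  have hle : ∀ m, j ≤ m → m ≤ k → p m := by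
    refine Nat.le_induction (fun _ => hj) fun m hjm ih hmk => ?_
    exact h m hjm hmk (ih (Nat.le_of_succ_le hmk))
  exact hk (hle k hjk le_rfl)

theorem Fin.exists_adjacent_and_not_of_le {n : ℕ} {p : Fin n → Prop} {j k : Fin n} (hjk : j ≤ k)
    (hj : p j) (hk : ¬ p k) :
    ∃ l l' : Fin n, (l' : ℕ) = l + 1 ∧ j ≤ l ∧ l' ≤ k ∧ p l ∧ ¬ p l' := by
  obtain ⟨l, hjl, hlk, ⟨hln, hl⟩, hl'⟩ :=
    Nat.exists_le_lt_and_not_succ (p := fun m => ∃ h : m < n, p ⟨m, h⟩) hjk ⟨j.isLt, hj⟩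
      (fun ⟨_, h⟩ => hk h)
  have hl'n : l + 1 < n := lt_of_le_of_lt hlk k.isLt
  exact ⟨⟨l, hln⟩, ⟨l + 1, hl'n⟩, rfl, hjl, hlk, hl, fun h => hl' ⟨hl'n, h⟩⟩

theorem exists_213_iff_exists_2_13 {α : Type*} [LinearOrder α] {n : ℕ} {f : Fin n → α}
    (hf : Function.Injective f) :
    (∃ i j k : Fin n, i < j ∧ j < k ∧ f j < f i ∧ f i < f k) ↔
    (∃ i l l' : Fin n, (l' : ℕ) = (l : ℕ) + 1 ∧ i < l ∧ f l < f i ∧ f i < f l') := by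
  constructor
  · rintro ⟨i, j, k, hij, hjk, hji, hik⟩
    obtain ⟨l, l', hl', hjl, -, hli, hil'⟩ :=
      Fin.exists_adjacent_and_not_of_le (p := fun m => f m < f i) hjk.le hji hik.not_gt
    have hil : i < l := hij.trans_le hjl
    have hl'i : l' ≠ i := fun h => by rw [Fin.lt_def] at hil; omega
    exact ⟨i, l, l', hl', hil, hli, (not_lt.mp hil').lt_of_ne (hf.ne hl'i).symm⟩
  · rintro ⟨i, l, l', hl', hil, hli, hil'⟩
    exact ⟨i, l, l', hil, Fin.lt_def.mpr (by omega), hli, hil'⟩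

theorem stmt1 (n : ℕ) (π : Equiv.Perm (Fin n)) :
    (∃ i j k : Fin n, i < j ∧ j < k ∧ π j < π i ∧ π i < π k) ↔
    (∃ i l l' : Fin n, (l' : ℕ) = (l : ℕ) + 1 ∧ i < l ∧ π l < π i ∧ π i < π l') :=
  exists_213_iff_exists_2_13 π.injective
end

section
/- The generating function D(t) = Σ_{n≥1} M_{n-1} t^n, where M_n are the Motzkin numbers, satisfies 2t·D(t) = 1 - t - sqrt(1 - 2t - 3t²); equivalently D(t) satisfies the algebraic equation t·D(t)² + (t-1)·D(t) + t = 0 with D(0)=0. -/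
/-- `D(t) = ∑_{n ≥ 1} M_{n-1} t^n` as a formal power series over `ℚ`. -/
noncomputable def D : PowerSeries ℚ :=
  PowerSeries.mk fun m => if m = 0 then 0 else (motzkin (m - 1) : ℚ)

/-!
Writing `D = t·M` with `M(t) = ∑ Mₙ tⁿ`, the recursion for the Motzkin numbers is exactly the
coefficientwise form of `M = 1 + t·M + t²·M²`; multiplying this by `t` gives the equation for `D`.
-/

open PowerSeries Finset

theorem motzkin_succ_succ (n : ℕ) :
    motzkin (n + 2) = motzkin (n + 1) + ∑ p ∈ antidiagonal n, motzkin p.1 * motzkin p.2 := by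
  rw [motzkin, sum_attach (range (n + 1)) fun k => motzkin k * motzkin (n + 1 - 1 - k),
    Nat.sum_antidiagonal_eq_sum_range_succ_mk]
  simp only [Nat.add_sub_cancel]

noncomputable def motzkinSeries (R : Type*) [CommSemiring R] : R⟦X⟧ :=
  mk fun n => (motzkin n : R)

theorem motzkinSeries_eq (R : Type*) [CommSemiring R] :
    motzkinSeries R = 1 + X * motzkinSeries R + X ^ 2 * motzkinSeries R ^ 2 := by
  rw [pow_two X, mul_assoc]
  ext (_ | _ | n)
  · simp [motzkinSeries, motzkin]
  · simp [motzkinSeries, coeff_succ_X_mul, motzkin]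
  · rw [map_add, map_add, coeff_succ_X_mul, coeff_succ_X_mul, coeff_succ_X_mul, sq, coeff_mul]
    simp [motzkinSeries, motzkin_succ_succ]

theorem D_eq_X_mul_motzkinSeries : D = X * motzkinSeries ℚ := by
  ext (_ | n) <;> simp [D, motzkinSeries, coeff_succ_X_mul]

theorem stmt2 :
    PowerSeries.X * D ^ 2 + (PowerSeries.X - 1) * D + PowerSeries.X = 0 := by
  rw [D_eq_X_mul_motzkinSeries]
  linear_combination (-X : ℚ⟦X⟧) * motzkinSeries_eq ℚ
end

section
/- The map φ sending a 2-1-3-avoiding permutation π ∈ S_n with right-to-left maxima π_{i_1}, ..., π_{i_m} (i_1 < ... < i_m = n) to the lattice path U^{i_1} D^{π_{i_1}-π_{i_2}} U^{i_2-i_1} D^{π_{i_2}-π_{i_3}} ⋯ U^{i_m-i_{m-1}} D^{π_{i_m}} is a bijection between 2-1-3-avoiding permutations of length n and Dyck paths with n up-steps and n down-steps. -/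
/-- A Dyck path of size `n`, encoded as a list of booleans (`true` = up-step `U`,
`false` = down-step `D`): length `2n`, `n` up-steps, and every prefix has at least
as many `U`'s as `D`'s. -/
def IsDyckPath (n : ℕ) (l : List Bool) : Prop :=
  l.length = 2 * n ∧ l.count true = n ∧
  ∀ p : List Bool, p <+: l → p.count false ≤ p.count true

/-- The sorted list of positions of right-to-left maxima of `π`. -/
def rlMaxima {n : ℕ} (π : Equiv.Perm (Fin n)) : List (Fin n) :=
  (Finset.univ.filter fun i : Fin n => ∀ j, i < j → π j < π i).sort (· ≤ ·)

/-- The map `φ` sending a permutation with right-to-left maxima at positions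
`i₁ < i₂ < ⋯ < i_m = n` to the lattice path
`U^{i₁} D^{π_{i₁}-π_{i₂}} U^{i₂-i₁} ⋯ U^{i_m-i_{m-1}} D^{π_{i_m}}`
(positions and values of `Fin n` are 0-indexed, hence the `+ 1`'s). -/
def phi {n : ℕ} (π : Equiv.Perm (Fin n)) : List Bool :=
  match rlMaxima π with
  | [] => []
  | i₁ :: rest =>
      List.replicate ((i₁ : ℕ) + 1) true ++
      (((i₁ :: rest).zip rest).flatMap fun p =>
        List.replicate ((π p.1 : ℕ) - (π p.2 : ℕ)) false ++
        List.replicate ((p.2 : ℕ) - (p.1 : ℕ)) true) ++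
      List.replicate ((π (rest.getLastD i₁) : ℕ) + 1) false

/-!
A 213-avoiding `π` with `π 0 = b` is `b`, followed by the `a = n - 1 - b` values above `b`,
followed by the `b` values below `b`: an entry below `b` followed later by one above `b`
would form a 213 with `π 0`. Both blocks are again 213-avoiding, so `π` is assembled from
smaller 213-avoiders `π₁` and `π₂`, and the right-to-left maxima of `π` are those of `π₁`
(or position 0 if `a = 0`) followed by those of `π₂`. Tracking the peaks of `φ` through this
gives `φ(π) = U φ(π₁) D φ(π₂)`. Since every nonempty Dyck path splits uniquely as
`U P₁ D P₂` with Dyck paths `P₁`, `P₂` (first return to zero), induction on `n` gives the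
bijection.
-/

open Equiv

theorem List.IsPrefix.append_cases {α : Type*} {p l₁ l₂ : List α} (h : p <+: l₁ ++ l₂) :
    p <+: l₁ ∨ ∃ r, p = l₁ ++ r ∧ r <+: l₂ := by
  rcases le_total p.length l₁.length with hl | hl
  · exact Or.inl ((List.isPrefix_append_of_length hl).1 h)
  · obtain ⟨r, rfl⟩ := List.prefix_of_prefix_length_le (List.prefix_append _ _) h hl
    exact Or.inr ⟨r, rfl, (List.prefix_append_right_inj l₁).1 h⟩

theorem List.Pairwise.head?_eq {α : Type*} {R : α → α → Prop} {l : List α} {x : α}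
    (hl : l.Pairwise R) (hx : x ∈ l) (hmin : ∀ y ∈ l, ¬ R y x) : l.head? = some x := by
  rcases l with _ | ⟨y, t⟩
  · simp at hx
  rcases List.mem_cons.1 hx with rfl | hx
  · rfl
  · exact absurd ((List.pairwise_cons.1 hl).1 x hx) (hmin y List.mem_cons_self)

theorem Finset.eq_Ioc_card_of_downward_closed {W : Finset ℕ} (h0 : 0 ∉ W)
    (hdown : ∀ p q, 0 < p → p < q → q ∈ W → p ∈ W) : W = Finset.Ioc 0 W.card := by
  have hsub : W ⊆ Finset.Ioc 0 W.card := fun q hq => by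
    have hq0 : 0 < q := Nat.pos_of_ne_zero fun e => h0 (e ▸ hq)
    have : Finset.Ioc 0 q ⊆ W := fun p hp => by
      rw [Finset.mem_Ioc] at hp
      rcases hp.2.lt_or_eq with hpq | rfl
      · exact hdown p q hp.1 hpq hq
      · exact hq
    simpa [hq0] using Finset.card_le_card this
  exact Finset.eq_of_subset_of_card_le hsub (by simp)

namespace IsDyckPath

theorem nil : IsDyckPath 0 [] :=
  ⟨rfl, rfl, fun p hp => by simp [List.prefix_nil.1 hp]⟩

theorem count_false {n : ℕ} {l : List Bool} (h : IsDyckPath n l) : l.count false = n := by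
  have := List.count_true_add_count_false l
  have := h.1
  have := h.2.1
  omega

theorem of_prefixes {l : List Bool} (hc : l.count false = l.count true)
    (hp : ∀ p, p <+: l → p.count false ≤ p.count true) : IsDyckPath (l.count true) l := by
  refine ⟨?_, rfl, hp⟩
  have := List.count_true_add_count_false l
  omega

theorem join {a b : ℕ} {l₁ l₂ : List Bool}
    (h₁ : IsDyckPath a l₁) (h₂ : IsDyckPath b l₂) :
    IsDyckPath (a + b + 1) (true :: l₁ ++ false :: l₂) := by
  have hf₁ := h₁.count_false
  refine ⟨by simp [h₁.1, h₂.1]; ring, by simp [h₁.2.1, h₂.2.1], fun p hp => ?_⟩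
  rcases List.prefix_cons_iff.1 hp with rfl | ⟨q, rfl, hq⟩
  · simp
  rcases hq.append_cases with hq | ⟨r, rfl, hr⟩
  · have := h₁.2.2 q hq
    simp; omega
  rcases List.prefix_cons_iff.1 hr with rfl | ⟨r', rfl, hr'⟩
  · have := h₁.2.2 l₁ (List.prefix_refl l₁)
    simp; omega
  · have := h₂.2.2 r' hr'
    simp [hf₁, h₁.2.1]; omega

/-- Splitting at the first step that goes below zero. -/
theorem exists_eq_append_false_cons (t : List Bool)
    (ht : ∃ p, p <+: t ∧ p.count true < p.count false) :
    ∃ q r, t = q ++ false :: r ∧ IsDyckPath (q.count true) q := by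
  induction t using List.reverseRecOn with
  | nil => simp at ht
  | append_singleton s x ih =>
    by_cases hs : ∃ p, p <+: s ∧ p.count true < p.count false
    · obtain ⟨q, r, rfl, hq⟩ := ih hs
      exact ⟨q, r ++ [x], by simp, hq⟩
    push Not at hs
    obtain ⟨p, hp, hlt⟩ := ht
    rcases List.prefix_concat_iff.1 hp with rfl | hp
    · have := hs s (List.prefix_refl s)
      cases x
      · exact ⟨s, [], rfl, of_prefixes (by simp at hlt; omega) hs⟩
      · simp at hlt; omega
    · exact absurd (hs p hp) (by omega)

theorem exists_eq_join {n : ℕ} {l : List Bool} (h : IsDyckPath n l) (hn : 0 < n) :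
    ∃ a b l₁ l₂, a + b + 1 = n ∧ l = true :: l₁ ++ false :: l₂ ∧
      IsDyckPath a l₁ ∧ IsDyckPath b l₂ := by
  have hf := h.count_false
  obtain ⟨hlen, ht, hpre⟩ := h
  rcases l with _ | ⟨_ | _, t⟩
  · simp at hlen; omega
  · simpa using hpre [false] (by simp)
  simp at ht hf
  obtain ⟨q, r, rfl, hq⟩ := exists_eq_append_false_cons t ⟨t, List.prefix_refl t, by omega⟩
  have hqf := hq.count_false
  simp at ht hf
  refine ⟨_, r.count true, q, r, by omega, rfl, hq, of_prefixes (by omega) fun p hp => ?_⟩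
  have := hpre (true :: q ++ false :: p) (by simpa using hp)
  simp at this
  omega

theorem length_le_of_append_false_cons_eq {a a' : ℕ} {l₁ l₂ l₁' l₂' : List Bool}
    (h₁ : IsDyckPath a l₁) (h₁' : IsDyckPath a' l₁')
    (he : l₁ ++ false :: l₂ = l₁' ++ false :: l₂') : l₁'.length ≤ l₁.length := by
  by_contra! hlt
  -- otherwise `l₁ ++ [false]`, which ends one step below zero, would be a prefix of `l₁'`
  have hpre : l₁ ++ [false] <+: l₁' := by
    refine List.prefix_of_prefix_length_le (l₃ := l₁' ++ false :: l₂') ?_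
      (List.prefix_append _ _) (by simp; omega)
    exact he ▸ ⟨l₂, by simp⟩
  have := h₁'.2.2 _ hpre
  have := h₁.count_false
  have := h₁.2.1
  simp at *
  omega

theorem eq_of_append_false_cons_eq {a a' : ℕ} {l₁ l₂ l₁' l₂' : List Bool}
    (h₁ : IsDyckPath a l₁) (h₁' : IsDyckPath a' l₁')
    (he : l₁ ++ false :: l₂ = l₁' ++ false :: l₂') : l₁ = l₁' ∧ l₂ = l₂' := by
  obtain ⟨e₁, e₂⟩ := List.append_inj he (le_antisymm
    (length_le_of_append_false_cons_eq h₁' h₁ he.symm)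
    (length_le_of_append_false_cons_eq h₁ h₁' he))
  exact ⟨e₁, List.cons_injective e₂⟩

end IsDyckPath

/-- The lattice path through the peaks `L`, where the peak `(q, v)` is reached after `q`
up-steps in total with `v` down-steps still to come; the path starts after `p` up-steps and
stops with `e` down-steps still to come. -/
def peakPath : ℕ → ℕ → List (ℕ × ℕ) → List Bool
  | _, _, [] => []
  | p, e, (q, v) :: L =>
      List.replicate (q - p) true ++ List.replicate (v - (L.map Prod.snd).headD e) false ++
        peakPath q e L

@[simp] theorem peakPath_nil (p e : ℕ) : peakPath p e [] = [] := rfl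

theorem peakPath_cons (p e q v : ℕ) (L : List (ℕ × ℕ)) :
    peakPath p e ((q, v) :: L) =
      List.replicate (q - p) true ++ List.replicate (v - (L.map Prod.snd).headD e) false ++
        peakPath q e L := rfl

theorem peakPath_cons_eq_replicate_append {p q : ℕ} (e v : ℕ) (L : List (ℕ × ℕ)) :
    peakPath p e ((q, v) :: L) = List.replicate (q - p) true ++ peakPath q e ((q, v) :: L) := by
  simp [peakPath_cons]

theorem peakPath_append (p e : ℕ) (L₁ L₂ : List (ℕ × ℕ)) :
    peakPath p e (L₁ ++ L₂) =
      peakPath p ((L₂.map Prod.snd).headD e) L₁ ++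
        peakPath ((L₁.map Prod.fst).getLastD p) e L₂ := by
  induction L₁ generalizing p with
  | nil => simp
  | cons x L₁ ih =>
    obtain ⟨q, v⟩ := x
    rw [List.cons_append, peakPath_cons, ih, peakPath_cons]
    rcases L₁ with _ | ⟨y, L₁⟩ <;>
      simp only [List.nil_append, List.cons_append, List.map_cons, List.map_nil, List.headD_nil,
        List.headD_cons, List.getLastD_cons, List.getLastD_nil, peakPath_nil, List.append_nil,
        List.append_assoc]

theorem peakPath_map_add (p e dp dv : ℕ) (L : List (ℕ × ℕ)) :
    peakPath (p + dp) (e + dv) (L.map (Prod.map (· + dp) (· + dv))) = peakPath p e L := by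
  induction L generalizing p with
  | nil => rfl
  | cons x L ih =>
    obtain ⟨q, v⟩ := x
    rw [List.map_cons, Prod.map_apply, peakPath_cons, ih, peakPath_cons]
    rcases L with _ | ⟨y, L⟩ <;> simp [Nat.add_sub_add_right]

theorem peakPath_of_forall_lt_snd (p : ℕ) {e : ℕ} {L : List (ℕ × ℕ)} (hL : L ≠ [])
    (he : ∀ x ∈ L, e < x.2) : peakPath p e L = peakPath p (e + 1) L ++ [false] := by
  induction L generalizing p with
  | nil => contradiction
  | cons x L ih =>
    obtain ⟨q, v⟩ := x
    rcases L with _ | ⟨⟨q', v'⟩, L⟩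
    · have : v - e = v - (e + 1) + 1 := by have := he _ List.mem_cons_self; simp at this; omega
      simp [peakPath_cons, this, List.replicate_succ']
    · simp only [List.forall_mem_cons] at he
      rw [peakPath_cons p e, peakPath_cons p (e + 1), ih q (by simp) (by simpa using he.2)]
      simp

theorem peakPath_of_forall_lt {p e : ℕ} {L : List (ℕ × ℕ)} (hL : L ≠ [])
    (hpe : ∀ x ∈ L, p < x.1 ∧ e < x.2) :
    peakPath p e L = true :: peakPath (p + 1) (e + 1) L ++ [false] := by
  obtain ⟨⟨q, v⟩, L, rfl⟩ := List.exists_cons_of_ne_nil hL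
  have hpq : q - p = q - (p + 1) + 1 := by have := (hpe _ List.mem_cons_self).1; omega
  rw [peakPath_of_forall_lt_snd p hL fun x hx => (hpe x hx).2, peakPath_cons p,
    peakPath_cons (p + 1), hpq, List.replicate_succ]
  rfl

def IsRLMax {n : ℕ} (π : Perm (Fin n)) (i : Fin n) : Prop := ∀ j, i < j → π j < π i

section RLMaxima

variable {n : ℕ} (π : Perm (Fin n))

theorem mem_rlMaxima {i : Fin n} : i ∈ rlMaxima π ↔ IsRLMax π i := by
  simp [rlMaxima, IsRLMax]

theorem pairwise_rlMaxima : (rlMaxima π).Pairwise (· < ·) :=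
  (Finset.sortedLT_sort _).pairwise

theorem rlMaxima_eq_of_pairwise {L : List (Fin n)} (hL : L.Pairwise (· < ·))
    (hmem : ∀ i, i ∈ L ↔ IsRLMax π i) : rlMaxima π = L :=
  ((List.perm_ext_iff_of_nodup (pairwise_rlMaxima π).nodup hL.nodup).2
    fun i => by rw [mem_rlMaxima, hmem]).eq_of_pairwise' (pairwise_rlMaxima π) hL

theorem rlMaxima_eq_nil_of_eq_zero (hn : n = 0) : rlMaxima π = [] := by
  subst hn; simp [rlMaxima]

theorem head?_rlMaxima (hn : 0 < n) :
    (rlMaxima π).head? = some (π.symm ⟨n - 1, by omega⟩) := by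
  refine (pairwise_rlMaxima π).head?_eq ((mem_rlMaxima π).2 fun j hj => ?_) fun y hy hlt => ?_
  · have hne : π j ≠ ⟨n - 1, by omega⟩ := fun e => hj.ne (π.symm_apply_eq.2 e.symm)
    rw [Fin.lt_def, apply_symm_apply]
    rw [Ne, Fin.ext_iff] at hne
    simp at hne ⊢
    omega
  · have := (mem_rlMaxima π).1 hy _ hlt
    rw [Fin.lt_def, apply_symm_apply] at this
    simp at this
    omega

theorem getLast?_rlMaxima (hn : 0 < n) : (rlMaxima π).getLast? = some ⟨n - 1, by omega⟩ := by
  rw [← List.head?_reverse]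
  refine (List.pairwise_reverse.2 (pairwise_rlMaxima π)).head?_eq (List.mem_reverse.2
    ((mem_rlMaxima π).2 fun j hj => absurd hj (by rw [Fin.lt_def]; simp; omega)))
    fun y _ hlt => ?_
  rw [Fin.lt_def] at hlt
  simp at hlt
  omega

/-- The peak of `phi π` at a right-to-left maximum `i` (0-indexed) comes after `i + 1`
up-steps, with `π i + 1` down-steps still to come. -/
def peak (i : Fin n) : ℕ × ℕ := ((i : ℕ) + 1, (π i : ℕ) + 1)

def peaks : List (ℕ × ℕ) := (rlMaxima π).map (peak π)

theorem peakPath_peak_cons (x : Fin n) (rest : List (Fin n)) :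
    peakPath ((x : ℕ) + 1) 0 (peak π x :: rest.map (peak π)) =
      (((x :: rest).zip rest).flatMap fun p =>
        List.replicate ((π p.1 : ℕ) - (π p.2 : ℕ)) false ++
        List.replicate ((p.2 : ℕ) - (p.1 : ℕ)) true) ++
      List.replicate ((π (rest.getLastD x) : ℕ) + 1) false := by
  induction rest generalizing x with
  | nil => simp [peak, peakPath_cons]
  | cons y rest ih =>
    rw [peak, peakPath_cons, List.map_cons, peak, peakPath_cons_eq_replicate_append, ← peak, ih,
      List.getLastD_cons]
    simp [peak, Nat.add_sub_add_right]

theorem phi_eq_peakPath : phi π = peakPath 0 0 (peaks π) := by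
  unfold phi peaks
  split
  · next h => simp [h]
  · next i rest h =>
    rw [h, List.map_cons, peak, peakPath_cons_eq_replicate_append, ← peak, peakPath_peak_cons,
      Nat.sub_zero, List.append_assoc]

theorem headD_map_snd_peaks : ((peaks π).map Prod.snd).headD 0 = n := by
  rcases Nat.eq_zero_or_pos n with hn | hn
  · simp [peaks, rlMaxima_eq_nil_of_eq_zero π hn, hn]
  · simp [peaks, peak, List.head?_map, head?_rlMaxima π hn]
    omega

end RLMaxima

section SkewJoin

variable {a b n : ℕ}

/-- Positions and values of `skewJoin h π₁ π₂`, split into the blocks `{0}`, `{1, …, a}`,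
`{a + 1, …, a + b}` of positions and `{b}`, `{b + 1, …, b + a}`, `{0, …, b - 1}` of values. -/
def blockPos (h : a + b + 1 = n) : Fin 1 ⊕ (Fin a ⊕ Fin b) ≃ Fin n :=
  (sumCongr (Equiv.refl _) finSumFinEquiv).trans (finSumFinEquiv.trans (finCongr (by omega)))

def blockVal (h : a + b + 1 = n) : Fin 1 ⊕ (Fin a ⊕ Fin b) ≃ Fin n :=
  (sumAssoc _ _ _).symm.trans <| (sumComm _ _).trans <|
    (sumCongr (Equiv.refl _) finSumFinEquiv).trans (finSumFinEquiv.trans (finCongr (by omega)))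

/-- The permutation `(1 ⊕ π₁) ⊖ π₂`, in terms of direct and skew sums. -/
def skewJoin (h : a + b + 1 = n) (π₁ : Perm (Fin a)) (π₂ : Perm (Fin b)) : Perm (Fin n) :=
  (blockPos h).symm.trans ((sumCongr (Equiv.refl _) (sumCongr π₁ π₂)).trans (blockVal h))

variable (h : a + b + 1 = n) (π₁ : Perm (Fin a)) (π₂ : Perm (Fin b))

@[simp] theorem blockPos_inl (x : Fin 1) : (blockPos h (.inl x) : ℕ) = 0 := by
  simp [blockPos]

@[simp] theorem blockPos_inr_inl (i : Fin a) : (blockPos h (.inr (.inl i)) : ℕ) = 1 + i := by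
  simp [blockPos]

@[simp] theorem blockPos_inr_inr (j : Fin b) :
    (blockPos h (.inr (.inr j)) : ℕ) = 1 + a + j := by
  simp [blockPos]; omega

@[simp] theorem blockVal_inl (x : Fin 1) : (blockVal h (.inl x) : ℕ) = b := by
  simp [blockVal]

@[simp] theorem blockVal_inr_inl (i : Fin a) :
    (blockVal h (.inr (.inl i)) : ℕ) = b + 1 + i := by
  simp [blockVal]; omega

@[simp] theorem blockVal_inr_inr (j : Fin b) : (blockVal h (.inr (.inr j)) : ℕ) = j := by
  simp [blockVal]

@[simp] theorem skewJoin_blockPos_inl (x : Fin 1) :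
    skewJoin h π₁ π₂ (blockPos h (.inl x)) = blockVal h (.inl x) := by
  simp [skewJoin]

@[simp] theorem skewJoin_blockPos_inr_inl (i : Fin a) :
    skewJoin h π₁ π₂ (blockPos h (.inr (.inl i))) = blockVal h (.inr (.inl (π₁ i))) := by
  simp [skewJoin]

@[simp] theorem skewJoin_blockPos_inr_inr (j : Fin b) :
    skewJoin h π₁ π₂ (blockPos h (.inr (.inr j))) = blockVal h (.inr (.inr (π₂ j))) := by
  simp [skewJoin]

theorem forall_blockPos {P : Fin n → Prop} :
    (∀ k, P k) ↔ P (blockPos h (.inl 0)) ∧ (∀ i, P (blockPos h (.inr (.inl i)))) ∧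
      ∀ j, P (blockPos h (.inr (.inr j))) := by
  simp [(blockPos h).forall_congr_right.symm, Sum.forall, Fin.forall_fin_one]

theorem isRLMax_skewJoin_inl :
    IsRLMax (skewJoin h π₁ π₂) (blockPos h (.inl 0)) ↔ a = 0 := by
  simp only [IsRLMax, forall_blockPos h]
  simp [Fin.lt_def, -Fin.val_fin_lt]
  refine ⟨fun H => ?_, by rintro rfl i; exact i.elim0⟩
  by_contra ha
  have := H ⟨0, by omega⟩
  omega

theorem isRLMax_skewJoin_inr_inl (i : Fin a) :
    IsRLMax (skewJoin h π₁ π₂) (blockPos h (.inr (.inl i))) ↔ IsRLMax π₁ i := by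
  simp only [IsRLMax, forall_blockPos h]
  simp [Fin.lt_def, -Fin.val_fin_lt]
  intro _ j _
  omega

theorem isRLMax_skewJoin_inr_inr (j : Fin b) :
    IsRLMax (skewJoin h π₁ π₂) (blockPos h (.inr (.inr j))) ↔ IsRLMax π₂ j := by
  simp only [IsRLMax, forall_blockPos h]
  simp [Fin.lt_def, -Fin.val_fin_lt]
  intro _ i _
  omega

theorem rlMaxima_skewJoin :
    rlMaxima (skewJoin h π₁ π₂) = (if a = 0 then [blockPos h (.inl 0)] else []) ++
      ((rlMaxima π₁).map (blockPos h ∘ .inr ∘ .inl) ++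
        (rlMaxima π₂).map (blockPos h ∘ .inr ∘ .inr)) := by
  apply rlMaxima_eq_of_pairwise
  · have h₁ := pairwise_rlMaxima π₁
    have h₂ := pairwise_rlMaxima π₂
    simp only [Fin.lt_def] at h₁ h₂
    split_ifs <;> simp [List.pairwise_append, List.pairwise_map, Fin.lt_def, -Fin.val_fin_lt,
      h₁, h₂, or_imp, forall_and] <;> intros <;> omega
  · intro k
    obtain ⟨x | i | j, rfl⟩ := (blockPos h).surjective k
    · obtain rfl := Subsingleton.elim x 0
      split_ifs <;> simp [isRLMax_skewJoin_inl, *]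
    · split_ifs <;> simp [isRLMax_skewJoin_inr_inl, mem_rlMaxima]
    · split_ifs <;> simp [isRLMax_skewJoin_inr_inr, mem_rlMaxima]

theorem peaks_skewJoin :
    peaks (skewJoin h π₁ π₂) = (if a = 0 then [(1, b + 1)] else []) ++
      ((peaks π₁).map (Prod.map (· + 1) (· + (b + 1))) ++
        (peaks π₂).map (Prod.map (· + (a + 1)) (· + 0))) := by
  unfold peaks
  rw [rlMaxima_skewJoin]
  split_ifs <;> simp [peak, List.map_map, Function.comp_def, add_comm, add_left_comm] <;> omega

theorem phi_skewJoin : phi (skewJoin h π₁ π₂) = true :: phi π₁ ++ false :: phi π₂ := by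
  set A :=
    (if a = 0 then [(1, b + 1)] else []) ++ (peaks π₁).map (Prod.map (· + 1) (· + (b + 1)))
  have hA : peakPath 0 b A = true :: phi π₁ ++ [false] := by
    rcases Nat.eq_zero_or_pos a with ha | ha
    · simp [A, ha, phi_eq_peakPath, peaks, rlMaxima_eq_nil_of_eq_zero π₁ ha, peakPath_cons]
    · have hne : rlMaxima π₁ ≠ [] := fun h => by simpa [h] using head?_rlMaxima π₁ ha
      rw [phi_eq_peakPath, ← peakPath_map_add 0 0 1 (b + 1), zero_add, zero_add]
      simp only [A, ha.ne', if_false, List.nil_append]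
      exact peakPath_of_forall_lt (by simpa [peaks, peak]) (by simp [peaks, peak]; omega)
  have hA_last : (A.map Prod.fst).getLastD 0 = a + 1 := by
    rcases Nat.eq_zero_or_pos a with ha | ha
    · simp [A, ha, peaks, rlMaxima_eq_nil_of_eq_zero π₁ ha]
    · simp [A, ha.ne', peaks, peak, List.getLast?_map, getLast?_rlMaxima π₁ ha]
      omega
  have hB : (((peaks π₂).map (Prod.map (· + (a + 1)) (· + 0))).map Prod.snd).headD 0 = b := by
    simpa [List.map_map, Function.comp_def] using headD_map_snd_peaks π₂
  rw [phi_eq_peakPath, peaks_skewJoin, ← List.append_assoc, peakPath_append, hB, hA_last, hA,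
    phi_eq_peakPath π₂, ← peakPath_map_add 0 0 (a + 1) 0 (peaks π₂)]
  simp

theorem Contains213.of_strictMono {m : ℕ} {π : Perm (Fin n)} {σ : Perm (Fin m)}
    {e : Fin m → Fin n} (he : StrictMono e) (hv : ∀ i j, π (e i) < π (e j) ↔ σ i < σ j)
    (hσ : Contains213 σ) : Contains213 π := by
  obtain ⟨i, j, k, hij, hjk, hji, hik⟩ := hσ
  exact ⟨e i, e j, e k, he hij, he hjk, (hv j i).2 hji, (hv i k).2 hik⟩

theorem contains213_skewJoin_iff :
    Contains213 (skewJoin h π₁ π₂) ↔ Contains213 π₁ ∨ Contains213 π₂ := by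
  constructor
  · rintro ⟨i, j, k, hij, hjk, hji, hik⟩
    obtain ⟨x, rfl⟩ := (blockPos h).surjective i
    obtain ⟨y, rfl⟩ := (blockPos h).surjective j
    obtain ⟨z, rfl⟩ := (blockPos h).surjective k
    -- values in block `1..a` exceed `b` and values in the last block are below it, so an
    -- occurrence of 213 lies within one block
    rcases x with _ | i | i <;> rcases y with _ | j | j <;> rcases z with _ | k | k <;>
      simp [Fin.lt_def, -Fin.val_fin_lt] at hij hjk hji hik <;>
      first
      | omega
      | exact Or.inl ⟨i, j, k, by omega, by omega, by omega, by omega⟩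
      | exact Or.inr ⟨i, j, k, by omega, by omega, by omega, by omega⟩
  · rintro (hσ | hσ)
    · refine hσ.of_strictMono (e := blockPos h ∘ .inr ∘ .inl) (fun i j hij => ?_)
        fun i j => ?_
      · simp [Fin.lt_def, -Fin.val_fin_lt] at hij ⊢; omega
      · simp [Fin.lt_def, -Fin.val_fin_lt]
    · refine hσ.of_strictMono (e := blockPos h ∘ .inr ∘ .inr) (fun i j hij => ?_)
        fun i j => ?_
      · simp [Fin.lt_def, -Fin.val_fin_lt] at hij ⊢; omega
      · simp [Fin.lt_def, -Fin.val_fin_lt]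

end SkewJoin

section Decomposition

variable {n : ℕ} (π : Perm (Fin n))

theorem card_filter_apply_lt_apply (x : Fin n) :
    (Finset.univ.filter fun k => π x < π k).card = n - 1 - π x := by
  rw [← Fin.card_Ioi, ← Finset.card_map π.toEmbedding]
  congr 1
  ext v
  simp

/-- If `0 < p < q` and `π p < π 0 < π q`, then `(0, p, q)` is an occurrence of 213: the
positions of the values above `π 0` form an initial run of `1, …, n - 1`. -/
theorem apply_zero_lt_apply_iff (hn : 0 < n) (hπ : ¬ Contains213 π) (k : Fin n) :
    π ⟨0, hn⟩ < π k ↔ 0 < (k : ℕ) ∧ (k : ℕ) ≤ n - 1 - π ⟨0, hn⟩ := by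
  set z : Fin n := ⟨0, hn⟩
  set W := (Finset.univ.filter fun k => π z < π k).image Fin.val
  have hW : W = Finset.Ioc 0 (n - 1 - π z) := by
    rw [Finset.eq_Ioc_card_of_downward_closed (W := W) ?_ ?_,
      Finset.card_image_of_injective _ Fin.val_injective, card_filter_apply_lt_apply]
    · simp only [W, Finset.mem_image, Finset.mem_filter, Finset.mem_univ, true_and, not_exists,
        not_and]
      intro k hk e
      exact hk.ne (congrArg π (Fin.ext e).symm)
    · simp only [W, Finset.mem_image, Finset.mem_filter, Finset.mem_univ, true_and]
      rintro p q hp hpq ⟨k, hk, rfl⟩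
      refine ⟨⟨p, by omega⟩, ?_, rfl⟩
      by_contra hle
      have hne : π ⟨p, by omega⟩ ≠ π z := π.injective.ne (by simp [z, Fin.ext_iff]; omega)
      exact hπ ⟨z, ⟨p, by omega⟩, k, by simp [z, Fin.lt_def]; omega,
        by simp [Fin.lt_def]; omega, lt_of_le_of_ne (not_lt.1 hle) hne, hk⟩
  have := congrArg ((k : ℕ) ∈ ·) hW
  simpa [W, ← Fin.ext_iff] using this

theorem exists_skewJoin_eq (hn : 0 < n) (hπ : ¬ Contains213 π) :
    ∃ a b, ∃ (h : a + b + 1 = n) (π₁ : Perm (Fin a)) (π₂ : Perm (Fin b)),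
      π = skewJoin h π₁ π₂ := by
  have hsplit := apply_zero_lt_apply_iff π hn hπ
  set b : ℕ := (π ⟨0, hn⟩ : ℕ)
  have h : n - 1 - b + b + 1 = n := by omega
  set ρ : Perm (Fin 1 ⊕ (Fin (n - 1 - b) ⊕ Fin b)) :=
    (blockPos h).trans (π.trans (blockVal h).symm)
  have hρ : ∀ x, blockVal h (ρ x) = π (blockPos h x) := by simp [ρ]
  have hρ_inl : Set.MapsTo ρ (Set.range .inl) (Set.range .inl) := by
    rintro _ ⟨x, rfl⟩
    have : (blockVal h (ρ (.inl x)) : ℕ) = b := by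
      rw [hρ]; congr; ext; simp
    rcases hx : ρ (.inl x) with y | i | j <;> simp [hx] at this ⊢ <;> omega
  obtain ⟨⟨σ₀, ρ'⟩, hρ'⟩ := Perm.mem_sumCongrHom_range_of_perm_mapsTo_inl hρ_inl
  obtain rfl : σ₀ = 1 := Subsingleton.elim _ _
  have hρ'_inl : Set.MapsTo ρ' (Set.range .inl) (Set.range .inl) := by
    rintro _ ⟨i, rfl⟩
    have : b < (blockVal h (ρ (.inr (.inl i))) : ℕ) := by
      rw [hρ, ← Fin.lt_def, hsplit]; simp; omega
    rw [← hρ'] at this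
    rcases hx : ρ' (.inl i) with i' | j <;> simp [hx] at this ⊢
    omega
  obtain ⟨⟨π₁, π₂⟩, hπ'⟩ := Perm.mem_sumCongrHom_range_of_perm_mapsTo_inl hρ'_inl
  refine ⟨_, _, h, π₁, π₂, Equiv.ext fun k => ?_⟩
  obtain ⟨x, rfl⟩ := (blockPos h).surjective k
  rw [← hρ, ← hρ', ← hπ']
  rcases x with x | i | j <;> simp

end Decomposition

theorem phi_of_eq_zero {n : ℕ} (π : Perm (Fin n)) (hn : n = 0) : phi π = [] := by
  simp [phi_eq_peakPath, peaks, rlMaxima_eq_nil_of_eq_zero π hn]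

theorem isDyckPath_phi {n : ℕ} {π : Perm (Fin n)} (hπ : ¬ Contains213 π) :
    IsDyckPath n (phi π) := by
  induction n using Nat.strong_induction_on with
  | _ n ih =>
    rcases Nat.eq_zero_or_pos n with hn | hn
    · rw [phi_of_eq_zero π hn, hn]
      exact IsDyckPath.nil
    obtain ⟨a, b, rfl, π₁, π₂, rfl⟩ := exists_skewJoin_eq π hn hπ
    rw [contains213_skewJoin_iff, not_or] at hπ
    rw [phi_skewJoin]
    exact (ih a (by omega) hπ.1).join (ih b (by omega) hπ.2)

theorem phi_injOn (n : ℕ) : Set.InjOn phi {π : Perm (Fin n) | ¬ Contains213 π} := by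
  induction n using Nat.strong_induction_on with
  | _ n ih =>
    intro π hπ σ hσ he
    rcases Nat.eq_zero_or_pos n with rfl | hn
    · exact Subsingleton.elim π σ
    obtain ⟨a, b, h, π₁, π₂, rfl⟩ := exists_skewJoin_eq π hn hπ
    obtain ⟨a', b', h', σ₁, σ₂, rfl⟩ := exists_skewJoin_eq σ hn hσ
    simp only [Set.mem_ofPred_eq, contains213_skewJoin_iff, not_or] at hπ hσ
    rw [phi_skewJoin, phi_skewJoin, List.cons_append, List.cons_append, List.cons_inj_right] at he
    obtain ⟨e₁, e₂⟩ :=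
      (isDyckPath_phi hπ.1).eq_of_append_false_cons_eq (isDyckPath_phi hσ.1) he
    have haa' : a = a' := by
      have := (isDyckPath_phi hπ.1).1
      rw [e₁, (isDyckPath_phi hσ.1).1] at this
      omega
    subst haa'
    obtain rfl : b = b' := by omega
    rw [ih a (by omega) hπ.1 hσ.1 e₁, ih b (by omega) hπ.2 hσ.2 e₂]

theorem phi_surjOn (n : ℕ) :
    Set.SurjOn phi {π : Perm (Fin n) | ¬ Contains213 π} {l | IsDyckPath n l} := by
  induction n using Nat.strong_induction_on with
  | _ n ih =>
    intro l hl
    rcases Nat.eq_zero_or_pos n with hn | hn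
    · refine ⟨1, fun ⟨i, _⟩ => (hn ▸ i).elim0, ?_⟩
      rw [phi_of_eq_zero _ hn, eq_comm, ← List.length_eq_zero_iff, hl.1, hn]
    obtain ⟨a, b, l₁, l₂, h, rfl, h₁, h₂⟩ := IsDyckPath.exists_eq_join hl hn
    obtain ⟨π₁, hπ₁, rfl⟩ := ih a (by omega) h₁
    obtain ⟨π₂, hπ₂, rfl⟩ := ih b (by omega) h₂
    refine ⟨skewJoin h π₁ π₂, ?_, phi_skewJoin h π₁ π₂⟩
    simp only [Set.mem_ofPred_eq, contains213_skewJoin_iff, not_or] at hπ₁ hπ₂ ⊢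
    exact ⟨hπ₁, hπ₂⟩

theorem stmt3 (n : ℕ) :
    (∀ π : Equiv.Perm (Fin n), ¬ Contains213 π → IsDyckPath n (phi π)) ∧
    Set.BijOn phi {π : Equiv.Perm (Fin n) | ¬ Contains213 π}
      {l : List Bool | IsDyckPath n l} :=
  ⟨fun _ => isDyckPath_phi, fun _ => isDyckPath_phi, phi_injOn n, phi_surjOn n⟩
end

section
/- For n ≥ 1, the number of permutations in S_n avoiding 2-1-3 and avoiding 2̄^o-31 (every descent is the '31' of an odd number of occurrences of 2-31) equals binomial(3k, k)/(2k+1) if n = 2k, and binomial(3k+1, k+1)/(2k+1) if n = 2k+1. -/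
/-- `π` avoids `2̄^o-31`: for every descent `π i > π (i+1)`, the number of `j < i` with
`π (i+1) < π j < π i` is odd. -/
def AvoidsOddBarred231 {n : ℕ} (π : Equiv.Perm (Fin n)) : Prop :=
  ∀ i i' : Fin n, (i' : ℕ) = (i : ℕ) + 1 → π i' < π i →
    Odd (Nat.card {j : Fin n // j < i ∧ π i' < π j ∧ π j < π i})

open Equiv Finset

variable {n : ℕ}

def numSmallerBefore (π : Perm (Fin n)) (i : Fin n) : ℕ := #{j | j < i ∧ π j < π i}

theorem numSmallerBefore_of_ascent {π : Perm (Fin n)} (h213 : ¬ Contains213 π) {i i' : Fin n}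
    (hi : (i' : ℕ) = i + 1) (hlt : π i < π i') :
    numSmallerBefore π i' = numSmallerBefore π i + 1 := by
  have hset : ({j | j < i' ∧ π j < π i'} : Finset (Fin n)) =
      insert i ({j | j < i ∧ π j < π i} : Finset (Fin n)) := by
    ext j
    simp only [mem_insert, mem_filter, mem_univ, true_and]
    constructor
    · rintro ⟨hji', hj⟩
      rcases lt_or_eq_of_le (Fin.le_def.2 (by omega : (j : ℕ) ≤ i)) with hji | rfl
      · refine .inr ⟨hji, (lt_or_gt_of_ne (π.injective.ne hji.ne)).resolve_right
          fun hij => h213 ⟨j, i, i', hji, ?_, hij, hj⟩⟩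
        exact Fin.lt_def.2 (by omega)
      · exact .inl rfl
    · rintro (rfl | ⟨hji, hj⟩)
      · exact ⟨Fin.lt_def.2 (by omega), hlt⟩
      · exact ⟨Fin.lt_def.2 (by omega), hj.trans hlt⟩
  rw [numSmallerBefore, hset, card_insert_of_notMem (by simp), numSmallerBefore]

theorem numSmallerBefore_of_descent {π : Perm (Fin n)} {i i' : Fin n}
    (hi : (i' : ℕ) = i + 1) (hlt : π i' < π i) :
    numSmallerBefore π i =
      numSmallerBefore π i' + #{j | j < i ∧ π i' < π j ∧ π j < π i} := by
  have hbelow : ({j | j < i' ∧ π j < π i'} : Finset (Fin n)) =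
      {j ∈ ({j | j < i ∧ π j < π i} : Finset (Fin n)) | π j < π i'} := by
    ext j
    simp only [mem_filter, mem_univ, true_and]
    constructor
    · rintro ⟨hji', hj⟩
      have hji : j ≠ i := by rintro rfl; exact lt_asymm hj hlt
      exact ⟨⟨Fin.lt_def.2 (by have := Fin.val_ne_of_ne hji; omega), hj.trans hlt⟩, hj⟩
    · rintro ⟨⟨hji, -⟩, hj⟩
      exact ⟨Fin.lt_def.2 (by omega), hj⟩
  have habove : ({j | j < i ∧ π i' < π j ∧ π j < π i} : Finset (Fin n)) =
      {j ∈ ({j | j < i ∧ π j < π i} : Finset (Fin n)) | ¬ π j < π i'} := by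
    ext j
    simp only [mem_filter, mem_univ, true_and, not_lt]
    constructor
    · rintro ⟨hji, hj, hj'⟩
      exact ⟨⟨hji, hj'⟩, hj.le⟩
    · rintro ⟨⟨hji, hj⟩, hj'⟩
      refine ⟨hji, lt_of_le_of_ne hj' fun h => ?_, hj⟩
      have := Fin.val_eq_of_eq (π.injective h)
      have := Fin.lt_def.1 hji
      omega
  rw [numSmallerBefore, numSmallerBefore, hbelow, habove, card_filter_add_card_filter_not]

def ParityCoded (π : Perm (Fin n)) : Prop := ∀ i : Fin n, numSmallerBefore π i % 2 = i % 2

theorem avoidsOddBarred231_iff_parityCoded {π : Perm (Fin n)} (h213 : ¬ Contains213 π) :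
    AvoidsOddBarred231 π ↔ ParityCoded π := by
  have hmid (i i' : Fin n) : Nat.card {j : Fin n // j < i ∧ π i' < π j ∧ π j < π i} =
      #{j | j < i ∧ π i' < π j ∧ π j < π i} := by
    rw [Nat.card_eq_fintype_card, Fintype.card_subtype]
  constructor
  · intro hodd i
    cases n with
    | zero => exact i.elim0
    | succ n =>
      induction i using Fin.induction with
      | zero => simp [numSmallerBefore]
      | succ i ih =>
        have hi : (i.succ : ℕ) = i.castSucc + 1 := rfl
        rcases lt_or_gt_of_ne (π.injective.ne (Fin.castSucc_lt_succ (i := i)).ne) with hlt | hlt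
        · have := numSmallerBefore_of_ascent h213 hi hlt
          omega
        · have := numSmallerBefore_of_descent hi hlt
          obtain ⟨t, ht⟩ := hmid _ _ ▸ hodd _ _ hi hlt
          omega
  · intro hpar i i' hi hlt
    rw [hmid, Nat.odd_iff]
    have := numSmallerBefore_of_descent hi hlt
    have := hpar i
    have := hpar i'
    omega

/-- Drop the last entry of `π` and standardize the remaining values. -/
def delLast (π : Perm (Fin (n + 1))) : Perm (Fin n) :=
  (finSuccAboveEquiv (Fin.last n)).trans <|
    (π.subtypeEquiv fun a => (π.injective.ne_iff (x := a) (y := Fin.last n)).symm).trans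
      (finSuccAboveEquiv (π (Fin.last n))).symm

theorem succAbove_delLast (π : Perm (Fin (n + 1))) (i : Fin n) :
    (π (Fin.last n)).succAbove (delLast π i) = π i.castSucc := by
  have h := congrArg Subtype.val ((finSuccAboveEquiv (π (Fin.last n))).apply_symm_apply
    ⟨π i.castSucc, π.injective.ne_iff.2 (Fin.castSucc_ne_last i)⟩)
  rw [finSuccAboveEquiv_apply] at h
  simpa [delLast, finSuccAboveEquiv_apply] using h

/-- Append the value `v` to `σ`, shifting the values `≥ v` up by one. -/
def extLast (σ : Perm (Fin n)) (v : Fin (n + 1)) : Perm (Fin (n + 1)) :=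
  finSuccEquivLast.trans ((optionCongr σ).trans (finSuccEquiv' v).symm)

@[simp]
theorem extLast_last (σ : Perm (Fin n)) (v : Fin (n + 1)) : extLast σ v (Fin.last n) = v := by
  simp [extLast]

@[simp]
theorem extLast_castSucc (σ : Perm (Fin n)) (v : Fin (n + 1)) (i : Fin n) :
    extLast σ v i.castSucc = v.succAbove (σ i) := by
  simp [extLast]

@[simp]
theorem delLast_extLast (σ : Perm (Fin n)) (v : Fin (n + 1)) : delLast (extLast σ v) = σ :=
  Equiv.ext fun i => Fin.succAbove_right_injective (p := v) <| by
    simpa using succAbove_delLast (extLast σ v) i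

theorem extLast_delLast (π : Perm (Fin (n + 1))) : extLast (delLast π) (π (Fin.last n)) = π :=
  Equiv.ext fun x => Fin.lastCases (by simp) (fun i => by simp [succAbove_delLast]) x

def HasInversionBelow (σ : Perm (Fin n)) (v : ℕ) : Prop :=
  ∃ a b : Fin n, a < b ∧ σ b < σ a ∧ (σ a : ℕ) < v

theorem contains213_extLast (σ : Perm (Fin n)) (v : Fin (n + 1)) :
    Contains213 (extLast σ v) ↔ Contains213 σ ∨ HasInversionBelow σ v := by
  constructor
  · rintro ⟨i, j, k, hij, hjk, h1, h2⟩
    obtain ⟨i, rfl⟩ := Fin.exists_castSucc_eq.2 (Fin.ne_last_of_lt (hij.trans hjk))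
    obtain ⟨j, rfl⟩ := Fin.exists_castSucc_eq.2 (Fin.ne_last_of_lt hjk)
    induction k using Fin.lastCases with
    | last =>
      rw [Fin.castSucc_lt_castSucc_iff] at hij
      rw [extLast_castSucc, extLast_castSucc, Fin.succAbove_lt_succAbove_iff] at h1
      rw [extLast_castSucc, extLast_last, Fin.succAbove_lt_iff_castSucc_lt] at h2
      exact .inr ⟨i, j, hij, h1, h2⟩
    | cast k =>
      simp only [extLast_castSucc, Fin.castSucc_lt_castSucc_iff,
        Fin.succAbove_lt_succAbove_iff] at hij hjk h1 h2
      exact .inl ⟨i, j, k, hij, hjk, h1, h2⟩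
  · rintro (⟨i, j, k, hij, hjk, h1, h2⟩ | ⟨a, b, hab, h1, h2⟩)
    · exact ⟨i.castSucc, j.castSucc, k.castSucc, by simpa using hij, by simpa using hjk,
        by simpa using h1, by simpa using h2⟩
    · refine ⟨a.castSucc, b.castSucc, Fin.last n, by simpa using hab, Fin.castSucc_lt_last b,
        by simpa using h1, ?_⟩
      rwa [extLast_castSucc, extLast_last, Fin.succAbove_lt_iff_castSucc_lt]

theorem numSmallerBefore_extLast_castSucc (σ : Perm (Fin n)) (v : Fin (n + 1)) (i : Fin n) :
    numSmallerBefore (extLast σ v) i.castSucc = numSmallerBefore σ i := by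
  simp only [numSmallerBefore, card_filter, Fin.sum_univ_castSucc, extLast_castSucc,
    Fin.castSucc_lt_castSucc_iff, Fin.succAbove_lt_succAbove_iff]
  simp [(Fin.castSucc_lt_last i).not_gt]

theorem numSmallerBefore_last (π : Perm (Fin (n + 1))) :
    numSmallerBefore π (Fin.last n) = π (Fin.last n) := by
  rw [numSmallerBefore, card_equiv π (t := {u | u < π (Fin.last n)}), filter_gt_eq_Iio,
    Fin.card_Iio]
  intro j
  simp only [mem_filter, mem_univ, true_and, and_iff_right_iff_imp]
  intro hj
  exact lt_of_le_of_ne (Fin.le_last j) (by rintro rfl; exact lt_irrefl _ hj)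

def Admissible (π : Perm (Fin n)) : Prop := ¬ Contains213 π ∧ ParityCoded π

theorem admissible_extLast_iff (σ : Perm (Fin n)) (v : Fin (n + 1)) :
    Admissible (extLast σ v) ↔
      Admissible σ ∧ ¬ HasInversionBelow σ v ∧ (v : ℕ) % 2 = n % 2 := by
  simp only [Admissible, ParityCoded, contains213_extLast, Fin.forall_fin_succ',
    numSmallerBefore_extLast_castSucc, numSmallerBefore_last, extLast_last, Fin.val_castSucc,
    Fin.val_last]
  tauto

theorem hasInversionBelow_iff {σ : Perm (Fin (n + 1))} (h213 : ¬ Contains213 σ) {v : ℕ}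
    (hv : v ≤ n + 1) : HasInversionBelow σ v ↔ (σ (Fin.last n) : ℕ) + 1 < v := by
  constructor
  · rintro ⟨a, b, hab, hba, hav⟩
    by_contra! hle
    have hlast : σ a < σ (Fin.last n) :=
      lt_of_le_of_ne (Fin.le_def.2 (by omega)) (σ.injective.ne (Fin.ne_last_of_lt hab))
    rcases (Fin.le_last b).lt_or_eq with hb | rfl
    · exact h213 ⟨a, b, Fin.last n, hab, hb, hba, hlast⟩
    · exact lt_asymm hba hlast
  · intro hlt
    set u : Fin (n + 1) := ⟨σ (Fin.last n) + 1, by omega⟩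
    have hu : σ (σ.symm u) = u := σ.apply_symm_apply u
    have hne : σ.symm u ≠ Fin.last n := by
      intro h
      rw [h] at hu
      exact absurd (congrArg Fin.val hu) (by simp [u])
    refine ⟨σ.symm u, Fin.last n, lt_of_le_of_ne (Fin.le_last _) hne, ?_, ?_⟩
    · rw [hu, Fin.lt_def]
      simp [u]
    · rw [hu]
      exact hlt

theorem not_hasInversionBelow_of_le_one (σ : Perm (Fin n)) {v : ℕ} (hv : v ≤ 1) :
    ¬ HasInversionBelow σ v := by
  rintro ⟨a, b, -, hba, hav⟩
  have := Fin.lt_def.1 hba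
  omega

section Counting

open scoped Classical

theorem card_admissible_last_eq (v : ℕ) (hv : v ≤ n) :
    #{π : Perm (Fin (n + 1)) | Admissible π ∧ (π (Fin.last n) : ℕ) = v} =
      if v % 2 = n % 2 then #{σ : Perm (Fin n) | Admissible σ ∧ ¬ HasInversionBelow σ v}
      else 0 := by
  set w : Fin (n + 1) := ⟨v, by omega⟩
  have himage :
      ({π | Admissible π ∧ (π (Fin.last n) : ℕ) = v} : Finset (Perm (Fin (n + 1)))) =
      ({σ | Admissible σ ∧ ¬ HasInversionBelow σ v ∧ v % 2 = n % 2} : Finset _).image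
        (extLast · w) := by
    ext π
    simp only [mem_filter, mem_univ, true_and, mem_image]
    constructor
    · rintro ⟨hπ, hlast⟩
      have hπw : extLast (delLast π) w = π := by
        rw [show w = π (Fin.last n) from Fin.ext hlast.symm, extLast_delLast]
      exact ⟨delLast π, (admissible_extLast_iff _ w).1 (by rwa [hπw]), hπw⟩
    · rintro ⟨σ, hσ, rfl⟩
      exact ⟨(admissible_extLast_iff σ w).2 hσ, by simp [w]⟩
  rw [himage, card_image_of_injective _ fun σ τ h => by simpa using congrArg delLast h]
  split_ifs with hp <;> simp [hp]

/-- Admissible permutations of length `m + 1` (not `m`) with last entry `v`. -/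
noncomputable def numEndingAt (m v : ℕ) : ℕ :=
  #{π : Perm (Fin (m + 1)) | Admissible π ∧ (π (Fin.last m) : ℕ) = v}

noncomputable def numEndingAtLeast (m u : ℕ) : ℕ :=
  #{π : Perm (Fin (m + 1)) | Admissible π ∧ u ≤ (π (Fin.last m) : ℕ)}

theorem card_admissible_eq_numEndingAt (n : ℕ) :
    #{π : Perm (Fin n) | Admissible π} = numEndingAt n (n % 2) := by
  rw [numEndingAt, card_admissible_last_eq _ (by omega), if_pos (Nat.mod_mod _ _)]
  simp only [not_hasInversionBelow_of_le_one _ (Nat.le_of_lt_succ (Nat.mod_lt n two_pos)),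
    not_false_eq_true, and_true]

theorem natCard_avoiding_eq_numEndingAt (n : ℕ) :
    Nat.card {π : Perm (Fin n) // ¬ Contains213 π ∧ AvoidsOddBarred231 π} =
      numEndingAt n (n % 2) := by
  rw [Nat.card_eq_fintype_card, Fintype.card_subtype, ← card_admissible_eq_numEndingAt]
  congr 1
  ext π
  simp only [mem_filter, mem_univ, true_and]
  exact and_congr_right avoidsOddBarred231_iff_parityCoded

theorem numEndingAt_eq_zero_of_lt {m v : ℕ} (h : m < v) : numEndingAt m v = 0 := by
  rw [numEndingAt, card_eq_zero, filter_eq_empty_iff]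
  rintro π - ⟨-, hv⟩
  have := (π (Fin.last m)).isLt
  omega

theorem numEndingAt_eq_zero_of_mod_two_ne {m v : ℕ} (h : v % 2 ≠ m % 2) :
    numEndingAt m v = 0 := by
  rw [numEndingAt, card_eq_zero, filter_eq_empty_iff]
  rintro π - ⟨⟨-, hpar⟩, hv⟩
  have := hpar (Fin.last m)
  rw [numSmallerBefore_last, hv, Fin.val_last] at this
  exact h this

theorem numEndingAtLeast_eq_zero_of_lt {m u : ℕ} (h : m < u) : numEndingAtLeast m u = 0 := by
  rw [numEndingAtLeast, card_eq_zero, filter_eq_empty_iff]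
  rintro π - ⟨-, hu⟩
  have := (π (Fin.last m)).isLt
  omega

theorem numEndingAtLeast_eq_add (m u : ℕ) :
    numEndingAtLeast m u = numEndingAt m u + numEndingAtLeast m (u + 1) := by
  rw [numEndingAtLeast,
    ← card_filter_add_card_filter_not (p := fun π => (π (Fin.last m) : ℕ) = u),
    filter_filter, filter_filter, numEndingAt, numEndingAtLeast]
  congr 2 <;> ext π <;> simp only [mem_filter, mem_univ, true_and, and_assoc, and_congr_right_iff]
    <;> omega

theorem numEndingAt_succ (m v : ℕ) :
    numEndingAt (m + 1) v = if v % 2 = (m + 1) % 2 then numEndingAtLeast m (v - 1) else 0 := by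
  rcases le_or_gt v (m + 1) with hv | hv
  · rw [numEndingAt, card_admissible_last_eq v hv, numEndingAtLeast]
    congr 2
    ext σ
    simp only [mem_filter, mem_univ, true_and, and_congr_right_iff]
    intro hσ
    rw [hasInversionBelow_iff hσ.1 hv]
    omega
  · rw [numEndingAt_eq_zero_of_lt hv, numEndingAtLeast_eq_zero_of_lt (by omega), ite_self]

theorem numEndingAt_self (m : ℕ) : numEndingAt m m = 1 := by
  induction m with
  | zero =>
    rw [← card_admissible_eq_numEndingAt 0, filter_true_of_mem fun π _ =>
      ⟨fun ⟨i, _⟩ => i.elim0, fun i => i.elim0⟩]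
    rfl
  | succ m ih =>
    rw [numEndingAt_succ, if_pos rfl, Nat.add_sub_cancel, numEndingAtLeast_eq_add, ih,
      numEndingAtLeast_eq_zero_of_lt (Nat.lt_succ_self m)]

theorem numEndingAt_succ_zero {m : ℕ} (hm : m % 2 = 1) :
    numEndingAt (m + 1) 0 = numEndingAt (m + 1) 2 := by
  rw [numEndingAt_succ, numEndingAt_succ, if_pos (by omega), if_pos (by omega),
    numEndingAtLeast_eq_add, numEndingAt_eq_zero_of_mod_two_ne (by omega), zero_add]

theorem numEndingAt_succ_succ {m u : ℕ} (hu : u % 2 = m % 2) :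
    numEndingAt (m + 1) (u + 1) = numEndingAt m u + numEndingAt (m + 1) (u + 3) := by
  rw [numEndingAt_succ m (u + 1), numEndingAt_succ m (u + 3), if_pos (by omega),
    if_pos (by omega), Nat.add_sub_cancel, show u + 3 - 1 = u + 1 + 1 by omega,
    numEndingAtLeast_eq_add, numEndingAtLeast_eq_add,
    numEndingAt_eq_zero_of_mod_two_ne (m := m) (v := u + 1) (by omega), zero_add]

end Counting

def closedForm (K v : ℕ) : ℚ := (v + 1) * (v + 3 * K).choose K / (v + 2 * K + 1)

theorem closedForm_zero (v : ℕ) : closedForm 0 v = 1 := by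
  rw [closedForm]
  field_simp
  simp

theorem closedForm_succ (K v : ℕ) :
    closedForm (K + 1) v = v * (v + 3 * K + 2).choose (K + 1) / (v + 2 * K + 2) +
      closedForm K (v + 2) := by
  have hW : ((v + 3 * K + 3).choose (K + 1) : ℚ) =
      (v + 3 * K + 3) * (v + 3 * K + 2).choose K / (K + 1) := by
    rw [eq_div_iff (by positivity)]
    exact_mod_cast (Nat.add_one_mul_choose_eq (v + 3 * K + 2) K).symm
  have hZ : ((v + 3 * K + 2).choose (K + 1) : ℚ) =
      (v + 2 * K + 2) * (v + 3 * K + 2).choose K / (K + 1) := by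
    rw [eq_div_iff (by positivity), mul_comm _ ((v + 3 * K + 2).choose K : ℚ)]
    have := Nat.choose_succ_right_eq (v + 3 * K + 2) K
    rw [show v + 3 * K + 2 - K = v + 2 * K + 2 by omega] at this
    exact_mod_cast this
  rw [closedForm, closedForm, show v + 3 * (K + 1) = v + 3 * K + 3 by ring,
    show v + 2 + 3 * K = v + 3 * K + 2 by ring, hW, hZ]
  push_cast
  field_simp
  ring

theorem numEndingAt_eq_closedForm (K v : ℕ) :
    (numEndingAt (v + 2 * K) v : ℚ) = closedForm K v := by
  induction K generalizing v with
  | zero => rw [closedForm_zero, mul_zero, add_zero, numEndingAt_self, Nat.cast_one]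
  | succ K ih =>
    induction v with
    | zero =>
      rw [show 0 + 2 * (K + 1) = 2 * K + 1 + 1 by ring, numEndingAt_succ_zero (by omega),
        closedForm_succ, ← ih 2, show 2 * K + 1 + 1 = 2 + 2 * K by ring]
      simp
    | succ u ihu =>
      have hfirst : closedForm (K + 1) u =
          (u + 1 : ℕ) * (u + 1 + 3 * K + 2).choose (K + 1) / ((u + 1 : ℕ) + 2 * K + 2) := by
        rw [closedForm, show u + 3 * (K + 1) = u + 1 + 3 * K + 2 by ring]
        push_cast
        ring
      rw [show u + 1 + 2 * (K + 1) = u + 2 * (K + 1) + 1 by ring,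
        numEndingAt_succ_succ (by omega), Nat.cast_add, ihu,
        show u + 2 * (K + 1) + 1 = u + 3 + 2 * K by ring, ih, hfirst, closedForm_succ K (u + 1)]

theorem closedForm_one (K : ℕ) :
    closedForm K 1 = (3 * K + 1).choose (K + 1) / (2 * K + 1) := by
  have h := Nat.choose_succ_right_eq (3 * K + 1) K
  rw [show 3 * K + 1 - K = 2 * K + 1 by omega] at h
  rw [closedForm, add_comm 1 (3 * K), div_eq_div_iff (by positivity) (by positivity)]
  push_cast
  linear_combination (2 : ℚ) * (by exact_mod_cast h.symm :
    ((3 * K + 1).choose K : ℚ) * (2 * K + 1) = (3 * K + 1).choose (K + 1) * (K + 1))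

theorem stmt6_general (n k : ℕ) :
    (n = 2 * k →
      (Nat.card {π : Equiv.Perm (Fin n) // ¬ Contains213 π ∧ AvoidsOddBarred231 π} : ℚ)
        = (Nat.choose (3 * k) k : ℚ) / (2 * k + 1)) ∧
    (n = 2 * k + 1 →
      (Nat.card {π : Equiv.Perm (Fin n) // ¬ Contains213 π ∧ AvoidsOddBarred231 π} : ℚ)
        = (Nat.choose (3 * k + 1) (k + 1) : ℚ) / (2 * k + 1)) := by
  constructor
  · rintro rfl
    rw [natCard_avoiding_eq_numEndingAt, Nat.mul_mod_right, ← zero_add (2 * k),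
      numEndingAt_eq_closedForm, closedForm]
    simp
  · rintro rfl
    rw [natCard_avoiding_eq_numEndingAt, show (2 * k + 1) % 2 = 1 by omega, add_comm,
      numEndingAt_eq_closedForm, closedForm_one]

theorem stmt6 (n k : ℕ) (hn : 1 ≤ n) :
    (n = 2 * k →
      (Nat.card {π : Equiv.Perm (Fin n) // ¬ Contains213 π ∧ AvoidsOddBarred231 π} : ℚ)
        = (Nat.choose (3 * k) k : ℚ) / (2 * k + 1)) ∧
    (n = 2 * k + 1 →
      (Nat.card {π : Equiv.Perm (Fin n) // ¬ Contains213 π ∧ AvoidsOddBarred231 π} : ℚ)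
        = (Nat.choose (3 * k + 1) (k + 1) : ℚ) / (2 * k + 1)) :=
  stmt6_general n k
end

section
/- The number of permutations in S_n avoiding the patterns 2-1-3 and 12-3 equals the Motzkin number M_n. -/
/-- `π` contains the generalized pattern 12-3 (first two positions adjacent). -/
def Contains12'3 {n : ℕ} (π : Equiv.Perm (Fin n)) : Prop :=
  ∃ i i' k : Fin n, (i' : ℕ) = (i : ℕ) + 1 ∧ i' < k ∧ π i < π i' ∧ π i' < π k

namespace List

variable {α β : Type*} [LinearOrder α] [LinearOrder β]

def Contains213 (l : List α) : Prop :=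
  ∃ x y z, [x, y, z] <+ l ∧ y < x ∧ x < z

/-- A suffix beginning with `x :: y` makes `x` and `y` adjacent entries of `l`. -/
def Contains12'3 (l : List α) : Prop :=
  ∃ x y r, x :: y :: r <:+ l ∧ x < y ∧ ∃ z ∈ r, y < z

variable {a m : α} {l B C : List α}

theorem contains213_cons :
    (a :: l).Contains213 ↔ l.Contains213 ∨ ¬ l.Pairwise (fun y z => y < a → z ≤ a) := by
  simp only [Contains213, sublist_cons_iff, pairwise_iff_forall_sublist, not_forall, not_le]
  constructor
  · rintro ⟨x, y, z, h | ⟨r, hr, h⟩, hyx, hxz⟩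
    · exact Or.inl ⟨x, y, z, h, hyx, hxz⟩
    · obtain ⟨rfl, rfl⟩ := cons_eq_cons.1 hr
      exact Or.inr ⟨y, z, h, hyx, hxz⟩
  · rintro (⟨x, y, z, h, hyx, hxz⟩ | ⟨y, z, h, hya, haz⟩)
    · exact ⟨x, y, z, Or.inl h, hyx, hxz⟩
    · exact ⟨a, y, z, Or.inr ⟨_, rfl, h⟩, hya, haz⟩

theorem contains12'3_cons :
    (a :: l).Contains12'3 ↔
      l.Contains12'3 ∨ ∃ b r, l = b :: r ∧ a < b ∧ ∃ z ∈ r, b < z := by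
  simp only [Contains12'3, suffix_cons_iff]
  constructor
  · rintro ⟨x, y, r, h | h, hxy, hz⟩
    · obtain ⟨rfl, rfl⟩ := cons_eq_cons.1 h
      exact Or.inr ⟨y, r, rfl, hxy, hz⟩
    · exact Or.inl ⟨x, y, r, h, hxy, hz⟩
  · rintro (⟨x, y, r, h, hxy, hz⟩ | ⟨b, r, rfl, hab, hz⟩)
    · exact ⟨x, y, r, Or.inr h, hxy, hz⟩
    · exact ⟨a, b, r, Or.inl rfl, hab, hz⟩

@[simp] theorem not_contains213_nil : ¬ ([] : List α).Contains213 := by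
  simp [Contains213]

@[simp] theorem not_contains12'3_nil : ¬ ([] : List α).Contains12'3 := by
  simp [Contains12'3]

theorem contains213_cons_of_forall_lt (h : ∀ x ∈ l, x < m) :
    (m :: l).Contains213 ↔ l.Contains213 := by
  rw [contains213_cons, or_iff_left (not_not.2 ?_)]
  exact pairwise_of_forall_mem_list fun _ _ z hz _ => (h z hz).le

theorem contains12'3_cons_of_forall_lt (h : ∀ x ∈ l, x < m) :
    (m :: l).Contains12'3 ↔ l.Contains12'3 := by
  rw [contains12'3_cons, or_iff_left]
  rintro ⟨b, r, rfl, hmb, -⟩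
  exact (h b mem_cons_self).not_gt hmb

theorem contains213_append_of_forall_lt (h : ∀ b ∈ B, ∀ c ∈ C, c < b) :
    (B ++ C).Contains213 ↔ B.Contains213 ∨ C.Contains213 := by
  induction B with
  | nil => simp
  | cons b B ih =>
    simp only [forall_mem_cons] at h
    have hC : C.Pairwise (fun y z => y < b → z ≤ b) :=
      pairwise_of_forall_mem_list fun _ _ z hz _ => (h.1 z hz).le
    have hBC : ∀ y ∈ B, ∀ z ∈ C, y < b → z ≤ b := fun _ _ z hz _ => (h.1 z hz).le
    rw [cons_append, contains213_cons, ih h.2, contains213_cons, pairwise_append,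
      and_iff_left ⟨hC, hBC⟩, or_right_comm]

theorem contains12'3_append_of_forall_lt (h : ∀ b ∈ B, ∀ c ∈ C, c < b) :
    (B ++ C).Contains12'3 ↔ B.Contains12'3 ∨ C.Contains12'3 := by
  induction B with
  | nil => simp
  | cons b B ih =>
    simp only [forall_mem_cons] at h
    have hfront : (∃ b' r, B ++ C = b' :: r ∧ b < b' ∧ ∃ z ∈ r, b' < z) ↔
        ∃ b' r, B = b' :: r ∧ b < b' ∧ ∃ z ∈ r, b' < z := by
      rcases B with _ | ⟨b₀, B⟩
      · simp only [nil_append, reduceCtorEq, false_and, exists_false, iff_false]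
        rintro ⟨b', r, rfl, hbb', -⟩
        exact (h.1 b' mem_cons_self).not_gt hbb'
      · simp only [cons_append, cons.injEq]
        constructor
        · rintro ⟨_, _, ⟨rfl, rfl⟩, hbb, z, hz, hbz⟩
          refine ⟨_, _, ⟨rfl, rfl⟩, hbb, z, ?_, hbz⟩
          rcases mem_append.1 hz with hz | hz
          · exact hz
          · exact absurd hbz (h.2 b₀ mem_cons_self z hz).not_gt
        · rintro ⟨_, _, ⟨rfl, rfl⟩, hbb, z, hz, hbz⟩
          exact ⟨_, _, ⟨rfl, rfl⟩, hbb, z, mem_append_left _ hz, hbz⟩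
    rw [cons_append, contains12'3_cons, ih h.2, contains12'3_cons, hfront, or_right_comm]

theorem contains213_cons_cons_append (ham : a < m) (hB : ∀ x ∈ B, a < x ∧ x < m)
    (hC : ∀ x ∈ C, x < a) :
    (a :: m :: (B ++ C)).Contains213 ↔ B.Contains213 ∨ C.Contains213 := by
  have hlt : ∀ x ∈ B ++ C, x < m := fun x hx =>
    (mem_append.1 hx).elim (fun hx => (hB x hx).2) fun hx => (hC x hx).trans ham
  have hpw : (m :: (B ++ C)).Pairwise (fun y z => y < a → z ≤ a) := by
    simp only [pairwise_cons, pairwise_append]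
    refine ⟨fun _ _ hma => absurd hma ham.not_gt,
      pairwise_of_forall_mem_list fun y hy _ _ hya => absurd hya (hB y hy).1.not_gt,
      pairwise_of_forall_mem_list fun _ _ z hz _ => (hC z hz).le,
      fun y hy _ _ hya => absurd hya (hB y hy).1.not_gt⟩
  rw [contains213_cons, or_iff_left (not_not.2 hpw), contains213_cons_of_forall_lt hlt,
    contains213_append_of_forall_lt fun b hb c hc => (hC c hc).trans (hB b hb).1]

theorem contains12'3_cons_cons_append (ham : a < m) (hB : ∀ x ∈ B, a < x ∧ x < m)
    (hC : ∀ x ∈ C, x < a) :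
    (a :: m :: (B ++ C)).Contains12'3 ↔ B.Contains12'3 ∨ C.Contains12'3 := by
  have hlt : ∀ x ∈ B ++ C, x < m := fun x hx =>
    (mem_append.1 hx).elim (fun hx => (hB x hx).2) fun hx => (hC x hx).trans ham
  rw [contains12'3_cons, contains12'3_cons_of_forall_lt hlt,
    contains12'3_append_of_forall_lt fun b hb c hc => (hC c hc).trans (hB b hb).1, or_iff_left]
  rintro ⟨_, r, h, -, z, hz, hmz⟩
  obtain ⟨rfl, rfl⟩ := cons_eq_cons.1 h
  exact (hlt z hz).not_gt hmz

theorem exists_eq_append_of_pairwise (hl : l.Pairwise (fun y z => y < a → z ≤ a))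
    (ha : a ∉ l) : ∃ B C, l = B ++ C ∧ (∀ x ∈ B, a < x) ∧ ∀ x ∈ C, x < a := by
  induction l with
  | nil => exact ⟨[], [], rfl, by simp, by simp⟩
  | cons x l ih =>
    rw [pairwise_cons] at hl
    rw [mem_cons, not_or] at ha
    rcases (Ne.symm ha.1).lt_or_gt with hxa | hax
    · refine ⟨[], x :: l, rfl, by simp, forall_mem_cons.2 ⟨hxa, fun z hz => ?_⟩⟩
      exact (hl.1 z hz hxa).lt_of_ne fun h => ha.2 (h ▸ hz)
    · obtain ⟨B, C, rfl, hB, hC⟩ := ih hl.2 ha.2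
      exact ⟨x :: B, C, rfl, forall_mem_cons.2 ⟨hax, hB⟩, hC⟩

theorem exists_eq_cons_of_not_contains (h213 : ¬ (a :: l).Contains213)
    (h123 : ¬ (a :: l).Contains12'3) (hal : a ∉ l) (hm : m ∈ l) (hmax : ∀ x ∈ l, x ≤ m)
    (ham : a < m) : ∃ r, l = m :: r := by
  rcases l with _ | ⟨x, r⟩
  · simp at hm
  rcases eq_or_ne x m with rfl | hxm
  · exact ⟨r, rfl⟩
  have hmr : m ∈ r := (mem_cons.1 hm).resolve_left hxm.symm
  have hxm : x < m := (hmax x mem_cons_self).lt_of_ne hxm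
  rcases (ne_of_mem_of_not_mem mem_cons_self hal).lt_or_gt with hxa | hax
  · exact absurd ⟨a, x, m, ((singleton_sublist.2 hmr).cons_cons x).cons_cons a, hxa, ham⟩ h213
  · exact absurd ⟨a, x, r, suffix_refl _, hax, m, hmr, hxm⟩ h123

theorem exists_eq_cons_append_of_not_contains (h213 : ¬ (a :: l).Contains213)
    (h123 : ¬ (a :: l).Contains12'3) (hal : a ∉ l) (hm : m ∈ l) (hmax : ∀ x ∈ l, x ≤ m)
    (ham : a < m) : ∃ B C, l = m :: (B ++ C) ∧ (∀ x ∈ B, a < x) ∧ ∀ x ∈ C, x < a := by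
  obtain ⟨r, rfl⟩ := exists_eq_cons_of_not_contains h213 h123 hal hm hmax ham
  have hpw := pairwise_cons.1 (not_not.1 (not_or.1 (contains213_cons.not.1 h213)).2)
  obtain ⟨B, C, rfl, hB, hC⟩ := exists_eq_append_of_pairwise hpw.2 (mt (mem_cons_of_mem m) hal)
  exact ⟨B, C, rfl, hB, hC⟩

theorem contains213_map {f : α → β} (hf : StrictMono f) :
    (l.map f).Contains213 ↔ l.Contains213 := by
  simp only [Contains213, sublist_map_iff]
  constructor
  · rintro ⟨x, y, z, ⟨l', hl', heq⟩, hyx, hxz⟩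
    rcases l' with _ | ⟨x', _ | ⟨y', _ | ⟨z', _ | _⟩⟩⟩ <;> simp only [map_cons, map_nil,
      cons.injEq, reduceCtorEq, and_false] at heq
    obtain ⟨rfl, rfl, rfl, -⟩ := heq
    exact ⟨x', y', z', hl', hf.lt_iff_lt.1 hyx, hf.lt_iff_lt.1 hxz⟩
  · rintro ⟨x, y, z, h, hyx, hxz⟩
    exact ⟨f x, f y, f z, ⟨_, h, rfl⟩, hf hyx, hf hxz⟩

theorem contains12'3_map {f : α → β} (hf : StrictMono f) :
    (l.map f).Contains12'3 ↔ l.Contains12'3 := by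
  simp only [Contains12'3, suffix_map_iff]
  constructor
  · rintro ⟨x, y, r, ⟨s, hs, heq⟩, hxy, z, hz, hyz⟩
    rcases s with _ | ⟨x', _ | ⟨y', r'⟩⟩ <;> simp only [map_cons, map_nil,
      cons.injEq, reduceCtorEq, and_false] at heq
    obtain ⟨rfl, rfl, rfl⟩ := heq
    obtain ⟨z', hz', rfl⟩ := mem_map.1 hz
    exact ⟨x', y', r', hs, hf.lt_iff_lt.1 hxy, z', hz', hf.lt_iff_lt.1 hyz⟩
  · rintro ⟨x, y, r, h, hxy, z, hz, hyz⟩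
    exact ⟨f x, f y, r.map f, ⟨_, h, rfl⟩, hf hxy, f z, mem_map_of_mem hz, hf hyz⟩

theorem contains213_iff_getElem {l : List α} : l.Contains213 ↔
    ∃ (i j k : ℕ) (hij : i < j) (hjk : j < k) (hk : k < l.length),
      l[j] < l[i] ∧ l[i] < l[k] := by
  constructor
  · rintro ⟨x, y, z, h, hyx, hxz⟩
    obtain ⟨is, heq, hpw⟩ := sublist_eq_map_getElem h
    rcases is with _ | ⟨i, _ | ⟨j, _ | ⟨k, _ | _⟩⟩⟩ <;> simp only [map_cons, map_nil,
      cons.injEq, reduceCtorEq, and_false] at heq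
    obtain ⟨rfl, rfl, rfl, -⟩ := heq
    simp only [pairwise_cons, mem_cons, forall_eq_or_imp, not_mem_nil] at hpw
    exact ⟨i, j, k, hpw.1.1, hpw.2.1.1, k.2, hyx, hxz⟩
  · rintro ⟨i, j, k, hij, hjk, hk, hji, hik⟩
    refine ⟨l[i], l[j], l[k], ?_, hji, hik⟩
    have := map_getElem_sublist (l := l) (is := [⟨i, by omega⟩, ⟨j, by omega⟩, ⟨k, hk⟩])
      (by simp [Fin.mk_lt_mk]; omega)
    simpa using this

theorem contains12'3_iff_getElem {l : List α} : l.Contains12'3 ↔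
    ∃ (i k : ℕ) (hik : i + 1 < k) (hk : k < l.length), l[i] < l[i + 1] ∧ l[i + 1] < l[k] := by
  constructor
  · rintro ⟨x, y, r, h, hxy, z, hz, hyz⟩
    obtain ⟨t, rfl⟩ := suffix_iff_exists_eq_append.1 h
    obtain ⟨j, hj, rfl⟩ := getElem_of_mem hz
    refine ⟨t.length, t.length + (j + 2), by omega, by simp; omega, ?_⟩
    simpa [getElem_append_right] using ⟨hxy, hyz⟩
  · rintro ⟨i, k, hik, hk, hxy, hyz⟩
    have hdrop : l.drop i = l[i] :: l[i + 1] :: l.drop (i + 2) := by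
      rw [drop_eq_getElem_cons, drop_eq_getElem_cons]
    refine ⟨l[i], l[i + 1], l.drop (i + 2), hdrop ▸ drop_suffix i l, hxy, l[k],
      mem_drop_iff_getElem.2 ⟨k - (i + 2), by omega, by congr 1; omega⟩, hyz⟩

end List

section

open List

theorem List.Perm.append_split {α : Type*} {p : α → Prop} [DecidablePred p]
    {l₁ l₂ l₃ l₄ : List α} (h : l₁ ++ l₂ ~ l₃ ++ l₄) (h₁ : ∀ x ∈ l₁, p x)
    (h₂ : ∀ x ∈ l₂, ¬ p x) (h₃ : ∀ x ∈ l₃, p x) (h₄ : ∀ x ∈ l₄, ¬ p x) :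
    l₁ ~ l₃ ∧ l₂ ~ l₄ := by
  have key : ∀ (q : α → Prop) [DecidablePred q] {m₁ m₂ m₃ m₄ : List α},
      m₁ ++ m₂ ~ m₃ ++ m₄ → (∀ x ∈ m₁, q x) → (∀ x ∈ m₂, ¬ q x) → (∀ x ∈ m₃, q x) →
        (∀ x ∈ m₄, ¬ q x) → m₁ ~ m₃ := by
    intro q _ m₁ m₂ m₃ m₄ h h₁ h₂ h₃ h₄
    simpa [filter_eq_self.2 (by simpa using h₁ : ∀ x ∈ m₁, decide (q x)),
      filter_eq_self.2 (by simpa using h₃ : ∀ x ∈ m₃, decide (q x)),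
      filter_eq_nil_iff.2 (by simpa using h₂ : ∀ x ∈ m₂, ¬ decide (q x)),
      filter_eq_nil_iff.2 (by simpa using h₄ : ∀ x ∈ m₄, ¬ decide (q x))]
      using h.filter (fun x => q x)
  exact ⟨key p h h₁ h₂ h₃ h₄, key (¬ p ·) (perm_append_comm.trans (h.trans perm_append_comm))
    h₂ (by simpa using h₁) h₄ (by simpa using h₃)⟩

theorem List.range_succ_perm_of_lt {n a : ℕ} (ha : a < n) :
    range (n + 1) ~ a :: n :: ((range (n - 1 - a)).map (a + 1 + ·) ++ range a) := by
  rw [← range'_eq_map_range]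
  refine (perm_ext_iff_of_nodup nodup_range ?_).2 fun x => ?_
  · simp only [nodup_cons, mem_cons, mem_append, mem_range'_1, mem_range, nodup_append,
      nodup_range]
    grind
  · simp only [mem_cons, mem_append, mem_range'_1, mem_range]
    omega

theorem List.exists_eq_map_add_of_forall_le {k : ℕ} {B : List ℕ} (h : ∀ x ∈ B, k ≤ x) :
    ∃ b : List ℕ, B = b.map (k + ·) := by
  refine ⟨B.map (· - k), ?_⟩
  rw [map_map]
  exact (map_id B).symm.trans (map_congr_left fun x hx => by
    have := h x hx
    simp only [id, Function.comp_apply]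
    omega)

def Equiv.Perm.oneLine {n : ℕ} (π : Equiv.Perm (Fin n)) : List ℕ :=
  ofFn fun i => (π i : ℕ)

namespace Equiv.Perm

variable {n : ℕ}

theorem oneLine_injective : Function.Injective (oneLine (n := n)) := fun _ _ h =>
  Equiv.ext fun i => Fin.ext (congrFun (ofFn_injective h) i)

theorem oneLine_perm_range (π : Perm (Fin n)) : π.oneLine ~ range n := by
  refine (perm_ext_iff_of_nodup ?_ nodup_range).2 fun x => ?_
  · exact nodup_ofFn.2 (Fin.val_injective.comp π.injective)
  · simp only [oneLine, mem_ofFn, mem_range]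
    exact ⟨by rintro ⟨i, rfl⟩; exact (π i).2, fun hx => ⟨π.symm ⟨x, hx⟩, by simp⟩⟩

theorem exists_oneLine_eq {l : List ℕ} (h : l ~ range n) :
    ∃ π : Perm (Fin n), π.oneLine = l := by
  have hlen : l.length = n := by simpa using h.length_eq
  have hnd : l.Nodup := h.nodup_iff.2 nodup_range
  let g : Fin n → Fin n := fun i =>
    ⟨l[i.1], by simpa using h.subset (getElem_mem (l := l) (by omega : i.1 < l.length))⟩
  have hg : Function.Injective g := fun i j hij =>
    Fin.ext (hnd.getElem_inj_iff.1 (Fin.ext_iff.1 hij))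
  refine ⟨Equiv.ofBijective g (Finite.injective_iff_bijective.1 hg),
    ext_getElem ?_ fun i _ _ => ?_⟩
  · simp [oneLine, hlen]
  · simp [oneLine, g]

theorem contains213_oneLine (π : Perm (Fin n)) :
    π.oneLine.Contains213 ↔ _root_.Contains213 π := by
  simp only [oneLine, contains213_iff_getElem, List.getElem_ofFn, Fin.val_fin_lt, length_ofFn,
    _root_.Contains213, exists_and_left, Fin.exists_iff, Fin.mk_lt_mk]
  constructor
  · rintro ⟨i, j, k, hij, hjk, hk, h⟩
    exact ⟨i, by omega, j, hij, by omega, k, hjk, h.1, hk, h.2⟩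
  · rintro ⟨i, _, j, hij, _, k, hjk, h1, hk, h2⟩
    exact ⟨i, j, k, hij, hjk, hk, h1, h2⟩

theorem contains12'3_oneLine (π : Perm (Fin n)) :
    π.oneLine.Contains12'3 ↔ _root_.Contains12'3 π := by
  simp only [oneLine, contains12'3_iff_getElem, List.getElem_ofFn, Fin.val_fin_lt, length_ofFn,
    _root_.Contains12'3, exists_and_left, Fin.exists_iff, Fin.mk_lt_mk, exists_eq_left]
  constructor
  · rintro ⟨i, k, hik, hk, h⟩
    exact ⟨i, by omega, by omega, k, hik, h.1, hk, h.2⟩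
  · rintro ⟨i, _, _, k, hik, h1, hk, h2⟩
    exact ⟨i, k, hik, hk, h1, h2⟩

end Equiv.Perm

open Classical in
noncomputable def avoiders (n : ℕ) : Finset (List ℕ) :=
  (range n).permutations.toFinset.filter fun l => ¬ l.Contains213 ∧ ¬ l.Contains12'3

theorem mem_avoiders {n : ℕ} {l : List ℕ} :
    l ∈ avoiders n ↔ l ~ range n ∧ ¬ l.Contains213 ∧ ¬ l.Contains12'3 := by
  simp [avoiders, mem_permutations]

theorem card_avoiding_perms (n : ℕ) :
    Nat.card {π : Equiv.Perm (Fin n) // ¬ Contains213 π ∧ ¬ Contains12'3 π} =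
      (avoiders n).card := by
  let S : Set (Equiv.Perm (Fin n)) := {π | ¬ Contains213 π ∧ ¬ Contains12'3 π}
  have himage : Equiv.Perm.oneLine '' S = avoiders n := by
    ext l
    simp only [S, Set.mem_image, Set.mem_ofPred_eq, Finset.mem_coe, mem_avoiders,
      ← Equiv.Perm.contains213_oneLine, ← Equiv.Perm.contains12'3_oneLine]
    constructor
    · rintro ⟨π, hπ, rfl⟩
      exact ⟨π.oneLine_perm_range, hπ⟩
    · rintro ⟨hl, hπ⟩
      obtain ⟨π, rfl⟩ := Equiv.Perm.exists_oneLine_eq hl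
      exact ⟨π, hπ, rfl⟩
  calc _ = Nat.card (Equiv.Perm.oneLine '' S) :=
        (Nat.card_image_of_injective Equiv.Perm.oneLine_injective S).symm
    _ = (avoiders n).card := by rw [himage]; exact Nat.card_eq_finsetCard _

theorem cons_mem_avoiders_succ {n : ℕ} {l : List ℕ} :
    n :: l ∈ avoiders (n + 1) ↔ l ∈ avoiders n := by
  have hrange : range (n + 1) ~ n :: range n := by
    rw [range_succ]; exact perm_append_singleton n (range n)
  have hperm : n :: l ~ range (n + 1) ↔ l ~ range n :=
    ⟨fun h => (perm_cons n).1 (h.trans hrange), fun h => (h.cons n).trans hrange.symm⟩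
  rw [mem_avoiders, mem_avoiders, hperm]
  refine and_congr_right fun h => ?_
  have hlt : ∀ x ∈ l, x < n := fun x hx => mem_range.1 (h.subset hx)
  rw [contains213_cons_of_forall_lt hlt, contains12'3_cons_of_forall_lt hlt]

theorem cons_cons_append_perm_range_succ_iff {n a : ℕ} {b c : List ℕ} (ha : a < n)
    (hc : ∀ x ∈ c, x < a) :
    a :: n :: (b.map (a + 1 + ·) ++ c) ~ range (n + 1) ↔
      b ~ range (n - 1 - a) ∧ c ~ range a := by
  have hrange := range_succ_perm_of_lt ha
  constructor
  · intro h
    obtain ⟨hb, hc⟩ := ((perm_cons n).1 ((perm_cons a).1 (h.trans hrange))).append_split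
      (p := (a < ·)) (fun x hx => by obtain ⟨y, -, rfl⟩ := mem_map.1 hx; omega)
      (fun x hx => (hc x hx).not_gt) (fun x hx => by obtain ⟨y, -, rfl⟩ := mem_map.1 hx; omega)
      (fun x hx => by have := mem_range.1 hx; omega)
    exact ⟨(map_perm_map_iff (add_right_injective _)).1 hb, hc⟩
  · rintro ⟨hb, hc⟩
    exact ((((hb.map _).append hc).cons n).cons a).trans hrange.symm

theorem cons_cons_append_mem_avoiders_succ_iff {n a : ℕ} {b c : List ℕ} (ha : a < n)
    (hc : ∀ x ∈ c, x < a) :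
    a :: n :: (b.map (a + 1 + ·) ++ c) ∈ avoiders (n + 1) ↔
      b ∈ avoiders (n - 1 - a) ∧ c ∈ avoiders a := by
  have hf : StrictMono (a + 1 + ·) := add_right_strictMono
  have hpatterns : b ~ range (n - 1 - a) →
      ((¬ (a :: n :: (b.map (a + 1 + ·) ++ c)).Contains213 ∧
        ¬ (a :: n :: (b.map (a + 1 + ·) ++ c)).Contains12'3) ↔
        (¬ b.Contains213 ∧ ¬ b.Contains12'3) ∧ ¬ c.Contains213 ∧ ¬ c.Contains12'3) := by
    intro hb
    have hB : ∀ x ∈ b.map (a + 1 + ·), a < x ∧ x < n := by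
      simp only [mem_map, hb.mem_iff, mem_range]
      rintro _ ⟨y, hy, rfl⟩
      omega
    rw [contains213_cons_cons_append ha hB hc, contains213_map hf,
      contains12'3_cons_cons_append ha hB hc, contains12'3_map hf]
    tauto
  rw [mem_avoiders, mem_avoiders, mem_avoiders, cons_cons_append_perm_range_succ_iff ha hc]
  constructor
  · rintro ⟨⟨hb, hc⟩, h⟩
    obtain ⟨hb', hc'⟩ := (hpatterns hb).1 h
    exact ⟨⟨hb, hb'⟩, hc, hc'⟩
  · rintro ⟨⟨hb, hb'⟩, hc, hc'⟩
    exact ⟨⟨hb, hc⟩, (hpatterns hb).2 ⟨hb', hc'⟩⟩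

theorem cons_mem_avoiders_succ_of_lt {n a : ℕ} {l : List ℕ} (ha : a < n) :
    a :: l ∈ avoiders (n + 1) ↔
      ∃ b ∈ avoiders (n - 1 - a), ∃ c ∈ avoiders a, l = n :: (b.map (a + 1 + ·) ++ c) := by
  constructor
  · intro h
    obtain ⟨hperm, h213, h123⟩ := mem_avoiders.1 h
    have hn : n ∈ l :=
      (mem_cons.1 (hperm.mem_iff.2 (mem_range.2 n.lt_succ_self))).resolve_left ha.ne'
    have hle : ∀ x ∈ l, x ≤ n := fun x hx =>
      Nat.lt_succ_iff.1 (mem_range.1 (hperm.subset (mem_cons_of_mem a hx)))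
    have hal : a ∉ l := (nodup_cons.1 (hperm.nodup_iff.2 nodup_range)).1
    obtain ⟨B, C, rfl, hB, hC⟩ := exists_eq_cons_append_of_not_contains h213 h123 hal hn hle ha
    obtain ⟨b, rfl⟩ := exists_eq_map_add_of_forall_le hB
    obtain ⟨hb, hc⟩ := (cons_cons_append_mem_avoiders_succ_iff ha hC).1 h
    exact ⟨b, hb, C, hc, rfl⟩
  · rintro ⟨b, hb, c, hc, rfl⟩
    exact (cons_cons_append_mem_avoiders_succ_iff ha
      fun x hx => mem_range.1 ((mem_avoiders.1 hc).1.subset hx)).2 ⟨hb, hc⟩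

theorem avoiders_succ (n : ℕ) :
    avoiders (n + 1) = (avoiders n).image (n :: ·) ∪
      (Finset.range n).biUnion fun a => (avoiders (n - 1 - a) ×ˢ avoiders a).image
        fun p => a :: n :: (p.1.map (a + 1 + ·) ++ p.2) := by
  ext l
  rcases l with _ | ⟨a, l⟩
  · simp [mem_avoiders]
  simp only [Finset.mem_union, Finset.mem_image, Finset.mem_biUnion, Finset.mem_product,
    Finset.mem_range, cons.injEq]
  rcases lt_trichotomy a n with ha | rfl | ha
  · rw [cons_mem_avoiders_succ_of_lt ha]
    constructor
    · rintro ⟨b, hb, c, hc, rfl⟩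
      exact Or.inr ⟨a, ha, (b, c), ⟨hb, hc⟩, rfl, rfl⟩
    · rintro (⟨_, _, h, _⟩ | ⟨_, _, ⟨b, c⟩, ⟨hb, hc⟩, rfl, rfl⟩)
      · exact absurd h ha.ne'
      · exact ⟨b, hb, c, hc, rfl⟩
  · rw [cons_mem_avoiders_succ]
    constructor
    · exact fun h => Or.inl ⟨l, h, rfl, rfl⟩
    · rintro (⟨_, h, -, rfl⟩ | ⟨_, h, _, -, rfl, -⟩)
      · exact h
      · exact absurd h (lt_irrefl _)
  · refine iff_of_false (fun h => ?_) ?_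
    · have := mem_range.1 ((mem_avoiders.1 h).1.subset mem_cons_self)
      omega
    · rintro (⟨_, _, h, _⟩ | ⟨_, h, _, _, rfl, _⟩) <;> omega

theorem card_avoiders_succ (n : ℕ) :
    (avoiders (n + 1)).card =
      (avoiders n).card +
        ∑ a ∈ Finset.range n, (avoiders (n - 1 - a)).card * (avoiders a).card := by
  rw [avoiders_succ, Finset.card_union_of_disjoint, Finset.card_image_of_injective _ cons_injective,
    Finset.card_biUnion]
  · congr 1
    refine Finset.sum_congr rfl fun a _ => ?_
    rw [Finset.card_image_of_injOn, Finset.card_product]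
    rintro ⟨b, c⟩ hbc ⟨b', c'⟩ hbc' h
    simp only [Finset.coe_product, Set.mem_prod, Finset.mem_coe, mem_avoiders] at hbc hbc'
    simp only [cons.injEq, true_and] at h
    obtain ⟨hb, hc⟩ := append_inj h (by simp [hbc.1.1.length_eq, hbc'.1.1.length_eq])
    rw [(map_injective_iff.2 (add_right_injective _)) hb, hc]
  · intro a _ a' _ haa'
    simp only [Function.onFun, Finset.disjoint_left, Finset.mem_image]
    rintro _ ⟨p, -, rfl⟩ ⟨p', -, h⟩
    exact haa' (cons_eq_cons.1 h).1.symm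
  · simp only [Finset.disjoint_left, Finset.mem_image, Finset.mem_biUnion, Finset.mem_range]
    rintro _ ⟨l, -, rfl⟩ ⟨a, ha, p, -, h⟩
    exact ha.ne (cons_eq_cons.1 h).1

theorem card_avoiders_zero : (avoiders 0).card = 1 := by
  simp [avoiders, Finset.filter_singleton]

theorem card_avoiders (n : ℕ) : (avoiders n).card = motzkin n := by
  induction n using Nat.strong_induction_on with
  | _ n ih =>
    rcases n with _ | n
    · rw [card_avoiders_zero, motzkin]
    · rw [card_avoiders_succ, motzkin, ih n n.lt_succ_self, ← Finset.sum_attach (Finset.range n)]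
      refine congrArg _ (Finset.sum_congr rfl fun k _ => ?_)
      have hk := Finset.mem_range.1 k.2
      rw [ih k (by omega), ih (n - 1 - k) (by omega), mul_comm]

end

theorem stmt11 (n : ℕ) :
    Nat.card {π : Equiv.Perm (Fin n) // ¬ Contains213 π ∧ ¬ Contains12'3 π}
      = motzkin n := by
  rw [card_avoiding_perms, card_avoiders]
end

section
/- The number of permutations in S_n avoiding the patterns 2-1-3 and 32-1 equals 2^{n-1}. -/
/-- `π` contains the generalized pattern 32-1 (first two positions adjacent). -/
def Contains32'1 {n : ℕ} (π : Equiv.Perm (Fin n)) : Prop :=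
  ∃ i i' k : Fin n, (i' : ℕ) = (i : ℕ) + 1 ∧ i' < k ∧ π k < π i' ∧ π i' < π i

open Equiv

section

variable {n : ℕ}

-- The permutation with first value `v` whose later entries are in the relative order of `σ`.
def consPerm (v : Fin (n + 1)) (σ : Perm (Fin n)) : Perm (Fin (n + 1)) :=
  ((finSuccEquiv' 0).trans σ.optionCongr).trans (finSuccEquiv' v).symm

@[simp] lemma consPerm_zero (v : Fin (n + 1)) (σ : Perm (Fin n)) : consPerm v σ 0 = v := by
  simp [consPerm, finSuccEquiv'_at]

@[simp] lemma consPerm_succ (v : Fin (n + 1)) (σ : Perm (Fin n)) (j : Fin n) :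
    consPerm v σ j.succ = v.succAbove (σ j) := by
  have h : finSuccEquiv' (0 : Fin (n + 1)) j.succ = some j := by
    rw [← Fin.zero_succAbove j, finSuccEquiv'_succAbove]
  simp [consPerm, h, finSuccEquiv'_symm_some]

lemma consPerm_bijective : Function.Bijective (Function.uncurry (consPerm (n := n))) := by
  refine ⟨fun ⟨v, σ⟩ ⟨w, τ⟩ h => ?_, fun π => ?_⟩
  · have h : consPerm v σ = consPerm w τ := h
    obtain rfl : v = w := by simpa using congr($h 0)
    exact Prod.ext rfl <| Equiv.ext fun j =>
      Fin.succAbove_right_injective (p := v) (by simpa using congr($h j.succ))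
  · let e := ((finSuccEquiv' 0).symm.trans π).trans (finSuccEquiv' (π 0))
    refine ⟨(π 0, removeNone e), Equiv.ext fun x => Fin.cases (by simp) (fun j => ?_) x⟩
    have hj : e (some j) = some (removeNone e j) := by
      refine (removeNone_some e ?_).symm
      obtain ⟨k, hk⟩ := Fin.exists_succAbove_eq (π.injective.ne (Fin.succ_ne_zero j))
      exact ⟨k, by simp [e, ← hk]⟩
    simp only [e, trans_apply, finSuccEquiv'_eq_some, finSuccEquiv'_symm_some,
      Fin.zero_succAbove] at hj
    simpa using hj.symm

-- Occurrences of the patterns in `consPerm v σ` that use its first entry.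
def HeadCreates213 (v : Fin (n + 1)) (σ : Perm (Fin n)) : Prop :=
  ∃ j k, j < k ∧ (σ j).castSucc < v ∧ v ≤ (σ k).castSucc

def HeadCreates32'1 (v : Fin (n + 2)) (σ : Perm (Fin (n + 1))) : Prop :=
  ∃ k, 0 < k ∧ σ k < σ 0 ∧ (σ 0).castSucc < v

lemma contains213_consPerm_iff (v : Fin (n + 1)) (σ : Perm (Fin n)) :
    Contains213 (consPerm v σ) ↔ Contains213 σ ∨ HeadCreates213 v σ := by
  rw [or_comm]
  simp [Contains213, HeadCreates213, Fin.exists_fin_succ, Fin.succAbove_lt_iff_castSucc_lt,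
    Fin.lt_succAbove_iff_le_castSucc]

lemma contains32'1_consPerm_iff (v : Fin (n + 2)) (σ : Perm (Fin (n + 1))) :
    Contains32'1 (consPerm v σ) ↔ Contains32'1 σ ∨ HeadCreates32'1 v σ := by
  rw [or_comm]
  simp [Contains32'1, HeadCreates32'1, Fin.exists_fin_succ, Fin.succAbove_lt_iff_castSucc_lt]

def Avoids213And32'1 (π : Perm (Fin n)) : Prop := ¬ Contains213 π ∧ ¬ Contains32'1 π

def nonzeroHead (σ : Perm (Fin (n + 1))) : Fin (n + 2) :=
  if σ 0 = 0 then Fin.last (n + 1) else (σ 0).castSucc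

lemma nonzeroHead_ne_zero (σ : Perm (Fin (n + 1))) : nonzeroHead σ ≠ 0 := by
  unfold nonzeroHead
  split_ifs with h0
  · exact Fin.last_pos.ne'
  · simpa using h0

lemma not_headCreates213_nonzeroHead {σ : Perm (Fin (n + 1))} (hσ : ¬ Contains213 σ) :
    ¬ HeadCreates213 (nonzeroHead σ) σ := by
  rintro ⟨j, k, hjk, hj, hk⟩
  unfold nonzeroHead at hj hk
  split_ifs at hj hk with h0
  · exact (Fin.castSucc_lt_last _).not_ge hk
  rw [Fin.castSucc_lt_castSucc_iff] at hj
  rw [Fin.castSucc_le_castSucc_iff] at hk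
  have hj0 : j ≠ 0 := by rintro rfl; exact hj.false
  have hk0 : k ≠ 0 := (pos_of_ne_zero hj0 |>.trans hjk).ne'
  exact hσ ⟨0, j, k, pos_of_ne_zero hj0, hjk, hj, hk.lt_of_ne (σ.injective.ne hk0.symm)⟩

lemma not_headCreates32'1_nonzeroHead (σ : Perm (Fin (n + 1))) :
    ¬ HeadCreates32'1 (nonzeroHead σ) σ := by
  rintro ⟨k, -, hk, h⟩
  unfold nonzeroHead at h
  split_ifs at h with h0
  · exact Fin.not_lt_zero _ (h0 ▸ hk)
  · exact h.false

lemma castSucc_head_le_of_not_headCreates213 {σ : Perm (Fin (n + 1))} {v : Fin (n + 2)}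
    (hσ : ¬ Contains32'1 σ) (hv : v ≠ 0) (h213 : ¬ HeadCreates213 v σ) :
    (σ 0).castSucc ≤ v := by
  by_contra! hlt
  -- The value `v` of `σ` sits after a larger entry, and the value `v - 1` comes later: a 32-1.
  set w := v.castPred (Fin.ne_last_of_lt hlt)
  have hwv : w.castSucc = v := Fin.castSucc_castPred _ _
  obtain ⟨m, hm⟩ : ∃ m : Fin n, σ m.succ = w := by
    obtain ⟨m, hm⟩ := Fin.exists_succ_eq.2 (show σ.symm w ≠ 0 by
      rw [Ne, σ.symm_apply_eq]
      intro h
      exact hlt.ne' (h ▸ hwv))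
    exact ⟨m, by simp [hm]⟩
  have hprev : w < σ m.castSucc := by
    refine lt_of_not_ge fun hle =>
      h213 ⟨m.castSucc, m.succ, Fin.castSucc_lt_succ, ?_, by rw [hm, hwv]⟩
    rw [← hwv, Fin.castSucc_lt_castSucc_iff, ← hm]
    exact (hm ▸ hle).lt_of_ne (σ.injective.ne Fin.castSucc_lt_succ.ne)
  set u := v.pred hv
  have hu : u.castSucc < v := Fin.castSucc_pred_lt hv
  have huw : u < w := by rwa [← hwv, Fin.castSucc_lt_castSucc_iff] at hu
  have hk : m.succ < σ.symm u := by
    refine lt_of_not_ge fun hle =>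
      h213 ⟨σ.symm u, m.succ, hle.lt_of_ne ?_, by simpa using hu, by rw [hm, hwv]⟩
    rw [Ne, σ.symm_apply_eq, hm]
    exact huw.ne
  exact hσ ⟨m.castSucc, m.succ, σ.symm u, by simp, hk, by simpa [hm] using huw, by rwa [hm]⟩

lemma eq_nonzeroHead_of_not_headCreates {σ : Perm (Fin (n + 1))} {v : Fin (n + 2)}
    (hσ : ¬ Contains32'1 σ) (hv : v ≠ 0) (h213 : ¬ HeadCreates213 v σ)
    (h321 : ¬ HeadCreates32'1 v σ) :
    v = nonzeroHead σ := by
  unfold nonzeroHead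
  split_ifs with h0
  · by_contra hlast
    set w := v.castPred hlast
    have hw0 : w ≠ 0 := by simpa [w] using hv
    refine h213 ⟨0, σ.symm w, Fin.pos_of_ne_zero ?_, by simp [h0, Fin.pos_of_ne_zero hv],
      by simp [w]⟩
    intro h
    exact hw0 (by simpa [h0] using congr(σ $h))
  refine le_antisymm (not_lt.1 fun hgt => h321 ⟨σ.symm 0, Fin.pos_of_ne_zero ?_, ?_, hgt⟩)
    (castSucc_head_le_of_not_headCreates213 hσ hv h213)
  · rwa [Ne, σ.symm_apply_eq, eq_comm]
  · simpa using Fin.pos_of_ne_zero h0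

lemma avoids_consPerm_iff {σ : Perm (Fin (n + 1))} {v : Fin (n + 2)} :
    Avoids213And32'1 (consPerm v σ) ↔
      Avoids213And32'1 σ ∧ (v = 0 ∨ v = nonzeroHead σ) := by
  simp only [Avoids213And32'1, contains213_consPerm_iff, contains32'1_consPerm_iff, not_or]
  constructor
  · rintro ⟨⟨h213, hv213⟩, h321, hv321⟩
    exact ⟨⟨h213, h321⟩, or_iff_not_imp_left.2 fun hv =>
      eq_nonzeroHead_of_not_headCreates h321 hv hv213 hv321⟩
  · rintro ⟨⟨h213, h321⟩, rfl | rfl⟩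
    · exact ⟨⟨h213, fun ⟨_, _, _, h, _⟩ => Fin.not_lt_zero _ h⟩,
        h321, fun ⟨_, _, _, h⟩ => Fin.not_lt_zero _ h⟩
    · exact ⟨⟨h213, not_headCreates213_nonzeroHead h213⟩,
        h321, not_headCreates32'1_nonzeroHead σ⟩

def consAvoider : Bool × {σ : Perm (Fin (n + 1)) // Avoids213And32'1 σ} →
    {π : Perm (Fin (n + 2)) // Avoids213And32'1 π} := fun ⟨b, σ, hσ⟩ =>
  ⟨consPerm (bif b then nonzeroHead σ else 0) σ,
    avoids_consPerm_iff.2 ⟨hσ, by cases b <;> simp⟩⟩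

lemma consAvoider_bijective : Function.Bijective (consAvoider (n := n)) := by
  refine ⟨fun ⟨b, σ, hσ⟩ ⟨c, τ, hτ⟩ h => ?_, fun ⟨π, hπ⟩ => ?_⟩
  · obtain ⟨hv, rfl⟩ : _ ∧ σ = τ := Prod.ext_iff.1 <|
      consPerm_bijective.1 (a₁ := (_, σ)) (a₂ := (_, τ)) congr(Subtype.val $h)
    have := nonzeroHead_ne_zero σ
    cases b <;> cases c <;> simp_all
  · obtain ⟨⟨v, σ⟩, rfl⟩ := consPerm_bijective.2 π
    obtain ⟨hσ, rfl | rfl⟩ := (avoids_consPerm_iff (v := v) (σ := σ)).1 hπ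
    · exact ⟨(false, ⟨σ, hσ⟩), rfl⟩
    · exact ⟨(true, ⟨σ, hσ⟩), rfl⟩

theorem card_avoids213And32'1 (m : ℕ) :
    Nat.card {π : Perm (Fin (m + 1)) // Avoids213And32'1 π} = 2 ^ m := by
  induction m with
  | zero =>
    change Nat.card {π : Perm (Fin 1) // Avoids213And32'1 π} = 1
    rw [Nat.card_eq_one_iff_unique]
    refine ⟨inferInstance, ⟨1, fun ⟨i, j, _, hij, _⟩ => hij.ne (Subsingleton.elim i j),
      fun ⟨_, i, k, _, hik, _⟩ => hik.ne (Subsingleton.elim i k)⟩⟩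
  | succ m ih =>
    rw [← Nat.card_eq_of_bijective _ consAvoider_bijective, Nat.card_prod, ih, pow_succ, mul_comm]
    simp

end

theorem stmt13 (n : ℕ) (hn : 1 ≤ n) :
    Nat.card {π : Equiv.Perm (Fin n) // ¬ Contains213 π ∧ ¬ Contains32'1 π}
      = 2 ^ (n - 1) := by
  obtain ⟨m, rfl⟩ : ∃ m, n = m + 1 := ⟨n - 1, by omega⟩
  exact card_avoids213And32'1 m
end

section
/- The number of permutations in S_n avoiding the patterns 2-1-3 and 34-21 equals (n-1)·2^{n-2} + 1 for n ≥ 1 (interpreting the formula as 1 when n = 1). -/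
/-- `π` contains the generalized pattern 34-21 (both pairs adjacent). -/
def Contains34'21 {n : ℕ} (π : Equiv.Perm (Fin n)) : Prop :=
  ∃ i i' k k' : Fin n, (i' : ℕ) = (i : ℕ) + 1 ∧ (k' : ℕ) = (k : ℕ) + 1 ∧ i' < k ∧
    π k' < π k ∧ π k < π i ∧ π i < π i'

/-!
Write a permutation as the list of its values and split it at its first entry `a`. If `a` is the
least or the greatest value, it takes part in no occurrence of 2-1-3 or 34-21, so the rest is an
arbitrary avoiding arrangement of the remaining values. Otherwise, avoiding a 2-1-3 that starts
at `a` forces all values above `a` to come before all values below it: the list is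
`a :: (M ++ L)`. A descent in `L` would form a 34-21 with `a` and the head of `M`, so `L` is
increasing, and then the list avoids both patterns exactly when every entry of `M` is the least
or the greatest of the entries of `M` from it onwards, which leaves `2 ^ (|M| - 1)` choices. As
`a` runs through the inner values, `|M|` runs through `1, …, n - 2`, so the counts satisfy
`f n = 2 f (n - 1) + 2 ^ (n - 2) - 1`.
-/

namespace List

theorem Sublist.of_cons_append {α : Type*} {y : α} {l M L : List α} (h : y :: l <+ M ++ L)
    (hy : y ∉ M) : y :: l <+ L := by
  obtain ⟨l₁, l₂, hl, h₁, h₂⟩ := sublist_append_iff.1 h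
  cases l₁ with
  | nil => simpa [hl] using h₂
  | cons b l₁ =>
    obtain ⟨rfl, -⟩ := cons_eq_cons.1 hl
    exact absurd (h₁.subset mem_cons_self) hy

theorem eq_take_append_cons_cons_append_cons_cons {α : Type*} {l : List α} {i k : ℕ}
    (hik : i + 2 ≤ k) (hk : k + 1 < l.length) :
    l = take i l ++ l[i] :: l[i + 1] :: (take (k - (i + 2)) (drop (i + 2) l) ++
      l[k] :: l[k + 1] :: drop (k + 2) l) := by
  have hdrop : drop k l = drop (k - (i + 2)) (drop (i + 2) l) := by
    rw [drop_drop, Nat.add_sub_cancel' hik]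
  rw [← drop_eq_getElem_cons (i := k + 1), ← drop_eq_getElem_cons (i := k), hdrop,
    take_append_drop, ← drop_eq_getElem_cons (i := i + 1), ← drop_eq_getElem_cons (i := i),
    take_append_drop]

variable {α : Type*} [LinearOrder α]

def Has213 (l : List α) : Prop :=
  ∃ x y z, [x, y, z] <+ l ∧ y < x ∧ x < z

def Has3421 (l : List α) : Prop :=
  ∃ l₁ l₂ l₃ x y z w, l = l₁ ++ x :: y :: (l₂ ++ z :: w :: l₃) ∧ w < z ∧ z < x ∧ x < y

def Avoids213And3421 (l : List α) : Prop :=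
  ¬ l.Has213 ∧ ¬ l.Has3421

def ExtremalHeads : List α → Prop
  | [] => True
  | a :: t => ((∀ x ∈ t, a < x) ∨ ∀ x ∈ t, x < a) ∧ ExtremalHeads t

variable {a : α} {t M L : List α}

theorem extremalHeads_nil : ([] : List α).ExtremalHeads :=
  trivial

theorem extremalHeads_cons_iff (ha : (∀ x ∈ t, a < x) ∨ ∀ x ∈ t, x < a) :
    (a :: t).ExtremalHeads ↔ t.ExtremalHeads :=
  and_iff_right ha

theorem Has213.cons (a : α) : t.Has213 → (a :: t).Has213 :=
  fun ⟨x, y, z, h, hyx, hxz⟩ => ⟨x, y, z, h.cons a, hyx, hxz⟩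

theorem has213_cons_iff :
    (a :: t).Has213 ↔ t.Has213 ∨ ∃ y z, [y, z] <+ t ∧ y < a ∧ a < z := by
  constructor
  · rintro ⟨x, y, z, h, hyx, hxz⟩
    rcases sublist_cons_iff.1 h with h | ⟨r, hr, h⟩
    · exact Or.inl ⟨x, y, z, h, hyx, hxz⟩
    · obtain ⟨rfl, rfl⟩ := cons_eq_cons.1 hr
      exact Or.inr ⟨y, z, h, hyx, hxz⟩
  · rintro (h | ⟨y, z, h, hya, haz⟩)
    · exact h.cons a
    · exact ⟨a, y, z, h.cons_cons a, hya, haz⟩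

theorem Has3421.cons (a : α) : t.Has3421 → (a :: t).Has3421 :=
  fun ⟨l₁, l₂, l₃, x, y, z, w, hl, h⟩ => ⟨a :: l₁, l₂, l₃, x, y, z, w, by simp [hl], h⟩

theorem Has3421.of_cons (h : (a :: t).Has3421) :
    t.Has3421 ∨ ∃ y ∈ t, ∃ z w, [z, w] <+ t ∧ w < z ∧ z < a ∧ a < y := by
  obtain ⟨l₁, l₂, l₃, x, y, z, w, hl, hwz, hzx, hxy⟩ := h
  cases l₁ with
  | nil =>
    obtain ⟨rfl, rfl⟩ := cons_eq_cons.1 hl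
    exact Or.inr ⟨y, mem_cons_self, z, w, by simp, hwz, hzx, hxy⟩
  | cons b l₁ =>
    exact Or.inl ⟨l₁, l₂, l₃, x, y, z, w, (cons_eq_cons.1 hl).2, hwz, hzx, hxy⟩

theorem Avoids213And3421.of_cons (h : (a :: t).Avoids213And3421) : t.Avoids213And3421 :=
  ⟨fun h' => h.1 (h'.cons a), fun h' => h.2 (h'.cons a)⟩

theorem avoids213And3421_cons_iff (ha : (∀ x ∈ t, a < x) ∨ ∀ x ∈ t, x < a) :
    (a :: t).Avoids213And3421 ↔ t.Avoids213And3421 := by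
  refine ⟨Avoids213And3421.of_cons, fun ⟨h₁, h₂⟩ => ⟨fun h => ?_, fun h => ?_⟩⟩
  · obtain h | ⟨y, z, hyz, hya, haz⟩ := has213_cons_iff.1 h
    · exact h₁ h
    have hy := hyz.subset mem_cons_self
    have hz := hyz.subset (mem_cons_of_mem _ mem_cons_self)
    rcases ha with ha | ha
    · exact (ha y hy).not_gt hya
    · exact (ha z hz).not_gt haz
  · obtain h | ⟨y, hy, z, w, hzw, -, hza, hay⟩ := h.of_cons
    · exact h₂ h
    have hz := hzw.subset mem_cons_self
    rcases ha with ha | ha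
    · exact (ha z hz).not_gt hza
    · exact (ha y hy).not_gt hay

theorem Pairwise.avoids213And3421 (hl : t.Pairwise (· ≤ ·)) : t.Avoids213And3421 := by
  have key : ∀ {x y}, [x, y] <+ t → x ≤ y := fun h => pairwise_pair.1 (hl.sublist h)
  constructor
  · rintro ⟨x, y, z, h, hyx, -⟩
    exact (key ((by simp : [x, y] <+ [x, y, z]).trans h)).not_gt hyx
  · rintro ⟨l₁, l₂, l₃, x, y, z, w, rfl, hwz, -, -⟩
    have hzw : [z, w] <+ l₂ ++ z :: w :: l₃ := by simp
    exact (key (((hzw.cons y).cons x).trans (sublist_append_right l₁ _))).not_gt hwz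

theorem eq_filter_lt_append_filter_gt (ha : a ∉ t) (h : ¬ ∃ y z, [y, z] <+ t ∧ y < a ∧ a < z) :
    t = t.filter (a < ·) ++ t.filter (· < a) := by
  induction t with
  | nil => rfl
  | cons b t ih =>
    rw [mem_cons, not_or] at ha
    rcases lt_or_gt_of_ne ha.1 with hab | hba
    · rw [filter_cons_of_pos (by simpa using hab), filter_cons_of_neg (by simpa using hab.le),
        cons_append, ← ih ha.2 fun ⟨y, z, hyz, hy, hz⟩ => h ⟨y, z, hyz.cons b, hy, hz⟩]
    · have ht (z) (hz : z ∈ t) : z < a :=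
        (lt_or_gt_of_ne (ne_of_mem_of_not_mem hz ha.2)).resolve_right fun haz =>
          h ⟨b, z, cons_sublist_cons.2 (singleton_sublist.2 hz), hba, haz⟩
      rw [filter_cons_of_neg (by simpa using hba.le), filter_cons_of_pos (by simpa using hba),
        filter_eq_nil_iff.2 (by simpa using fun z hz => (ht z hz).le),
        filter_eq_self.2 (by simpa using ht), nil_append]

theorem has3421_of_not_pairwise {b : α} (hab : a < b) (hL : ∀ x ∈ L, x < a)
    (hL' : ¬ L.Pairwise (· ≤ ·)) : (a :: b :: (M ++ L)).Has3421 := by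
  rw [← isChain_iff_pairwise, isChain_iff_forall_rel_of_append_cons_cons] at hL'
  push Not at hL'
  obtain ⟨z, w, l₁, l₂, rfl, hzw⟩ := hL'
  exact ⟨[], M ++ l₁, l₂, a, b, z, w, by simp, hzw, hL z (by simp), hab⟩

theorem avoids213And3421_cons_append_iff_of_lt {p : α} (hpM : ∀ x ∈ M, p < x)
    (hpL : ∀ y ∈ L, y < p) (hL : L.Pairwise (· ≤ ·)) :
    (p :: (M ++ L)).Avoids213And3421 ↔ (M ++ L).Avoids213And3421 := by
  have hnotM : ∀ y < p, y ∉ M := fun y hy hyM => (hpM y hyM).not_gt hy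
  refine ⟨Avoids213And3421.of_cons, fun ⟨h₁, h₂⟩ => ⟨fun h => ?_, fun h => ?_⟩⟩
  · obtain h | ⟨y, z, hyz, hyp, hpz⟩ := has213_cons_iff.1 h
    · exact h₁ h
    have hz := (hyz.of_cons_append (hnotM y hyp)).subset (mem_cons_of_mem _ mem_cons_self)
    exact (hpL z hz).not_gt hpz
  · obtain h | ⟨y, -, z, w, hzw, hwz, hzp, -⟩ := h.of_cons
    · exact h₂ h
    exact (pairwise_pair.1 (hL.sublist (hzw.of_cons_append (hnotM z hzp)))).not_gt hwz

/-- Avoiding 2-1-3 puts the entries above `p` before those below it. The entries below `p` contain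
`q₁` before the smaller `l`, hence a descent, which forms 34-21 with `p` and the entry after it. -/
theorem not_avoids213And3421_cons_append {p q₁ q₂ l : α} (hpM : p ∉ M) (hq₁ : q₁ ∈ M)
    (hq₁p : q₁ < p) (hq₂ : q₂ ∈ M) (hpq₂ : p < q₂) (hl : l ∈ L)
    (hML : ∀ x ∈ M, ∀ y ∈ L, y < x) : ¬ (p :: (M ++ L)).Avoids213And3421 := by
  rintro ⟨h₁, h₂⟩
  have hpt : p ∉ M ++ L := by
    rw [mem_append, not_or]
    exact ⟨hpM, fun hp => (hML q₁ hq₁ p hp).not_gt hq₁p⟩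
  have hsplit := eq_filter_lt_append_filter_gt hpt fun h => h₁ (has213_cons_iff.2 (Or.inr h))
  set B := (M ++ L).filter (p < ·)
  set S := (M ++ L).filter (· < p)
  have hS : ¬ S.Pairwise (· ≤ ·) := by
    intro hS
    have hq₁l : [q₁, l] <+ B ++ S :=
      hsplit ▸ (singleton_sublist.2 hq₁).append (singleton_sublist.2 hl)
    have hq₁B : q₁ ∉ B := by simp [B, hq₁p.le]
    exact (pairwise_pair.1 (hS.sublist (hq₁l.of_cons_append hq₁B))).not_gt (hML q₁ hq₁ l hl)
  have hq₂B : q₂ ∈ B := mem_filter.2 ⟨mem_append_left L hq₂, by simpa using hpq₂⟩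
  obtain ⟨b, B', hB⟩ := exists_cons_of_ne_nil (ne_nil_of_mem hq₂B)
  have hbB : b ∈ B := hB ▸ mem_cons_self
  have hpb : p < b := by simpa using (mem_filter.1 hbB).2
  refine h₂ ?_
  rw [hsplit, hB, cons_append]
  exact has3421_of_not_pairwise hpb (fun x hx => by simpa [S] using (mem_filter.1 hx).2) hS

theorem avoids213And3421_append_iff (hM : M.Nodup) (hL : L.Pairwise (· ≤ ·)) (hL₀ : L ≠ [])
    (hML : ∀ x ∈ M, ∀ y ∈ L, y < x) : (M ++ L).Avoids213And3421 ↔ M.ExtremalHeads := by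
  induction M with
  | nil => simpa [ExtremalHeads] using hL.avoids213And3421
  | cons p M ih =>
    rw [nodup_cons] at hM
    have hpL : ∀ y ∈ L, y < p := hML p mem_cons_self
    specialize ih hM.2 fun x hx => hML x (mem_cons_of_mem p hx)
    rw [cons_append]
    by_cases hmin : ∀ x ∈ M, p < x
    · rw [avoids213And3421_cons_append_iff_of_lt hmin hpL hL, ih]
      exact (extremalHeads_cons_iff (Or.inl hmin)).symm
    by_cases hmax : ∀ x ∈ M, x < p
    · have hmax' : ∀ x ∈ M ++ L, x < p := fun x hx => (mem_append.1 hx).elim (hmax x) (hpL x)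
      rw [avoids213And3421_cons_iff (Or.inr hmax'), ih]
      exact (extremalHeads_cons_iff (Or.inr hmax)).symm
    push Not at hmin hmax
    obtain ⟨q₁, hq₁, hq₁p⟩ := hmin
    obtain ⟨q₂, hq₂, hpq₂⟩ := hmax
    have hq₁p : q₁ < p := hq₁p.lt_of_ne fun h => hM.1 (h ▸ hq₁)
    have hpq₂ : p < q₂ := hpq₂.lt_of_ne fun h => hM.1 (h ▸ hq₂)
    obtain ⟨l, hl⟩ := exists_mem_of_ne_nil L hL₀
    refine iff_of_false (not_avoids213And3421_cons_append hM.1 hq₁ hq₁p hq₂ hpq₂ hl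
      fun x hx => hML x (mem_cons_of_mem p hx)) ?_
    exact fun h => h.1.elim (fun h => (h q₁ hq₁).not_gt hq₁p) fun h => (h q₂ hq₂).not_gt hpq₂

theorem avoids213And3421_cons_append_iff (hM : M.Nodup) (hM₀ : M ≠ []) (hL₀ : L ≠ [])
    (haM : ∀ x ∈ M, a < x) (haL : ∀ y ∈ L, y < a) :
    (a :: (M ++ L)).Avoids213And3421 ↔ L.Pairwise (· ≤ ·) ∧ M.ExtremalHeads := by
  have hsorted (hL : L.Pairwise (· ≤ ·)) :
      (a :: (M ++ L)).Avoids213And3421 ↔ M.ExtremalHeads := by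
    have haM' : ∀ x ∈ a :: M, ∀ y ∈ L, y < x := by
      simpa using ⟨haL, fun x hx y hy => (haL y hy).trans (haM x hx)⟩
    rw [← cons_append, avoids213And3421_append_iff
      (nodup_cons.2 ⟨fun ha => (haM a ha).false, hM⟩) hL hL₀ haM']
    exact extremalHeads_cons_iff (Or.inl haM)
  refine ⟨fun h => ?_, fun ⟨hL, hM⟩ => (hsorted hL).2 hM⟩
  have hL : L.Pairwise (· ≤ ·) := by
    by_contra hL
    obtain ⟨b, M, rfl⟩ := exists_cons_of_ne_nil hM₀
    exact h.2 (has3421_of_not_pairwise (haM b mem_cons_self) haL hL)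
  exact ⟨hL, (hsorted hL).1 h⟩

theorem has213_ofFn_iff {n : ℕ} (f : Fin n → α) :
    (ofFn f).Has213 ↔ ∃ i j k : Fin n, i < j ∧ j < k ∧ f j < f i ∧ f i < f k := by
  rw [Has213, ofFn_eq_map]
  constructor
  · rintro ⟨x, y, z, h, hyx, hxz⟩
    obtain ⟨l', hl', hmap⟩ := sublist_map_iff.1 h
    obtain ⟨i, j, k, rfl⟩ : ∃ i j k, l' = [i, j, k] := by
      match l', hmap with | [i, j, k], _ => exact ⟨i, j, k, rfl⟩
    simp only [map_cons, map_nil, cons.injEq, and_true] at hmap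
    obtain ⟨rfl, rfl, rfl⟩ := hmap
    obtain ⟨⟨hij, -⟩, hjk⟩ : (i < j ∧ i < k) ∧ j < k := by
      simpa using (pairwise_lt_finRange n).sublist hl'
    exact ⟨i, j, k, hij, hjk, hyx, hxz⟩
  · rintro ⟨i, j, k, hij, hjk, hji, hik⟩
    have hsorted : [i, j, k].Pairwise (· < ·) := by simp [hij, hjk, hij.trans hjk]
    refine ⟨f i, f j, f k, sublist_map_iff.2 ⟨[i, j, k], ?_, rfl⟩, hji, hik⟩
    exact sublist_of_subperm_of_pairwise (subperm_of_subset hsorted.nodup fun x _ => mem_finRange x)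
      (hsorted.imp le_of_lt) (pairwise_le_finRange n)

theorem has3421_ofFn_iff {n : ℕ} (f : Fin n → α) :
    (ofFn f).Has3421 ↔ ∃ i i' k k' : Fin n, (i' : ℕ) = i + 1 ∧ (k' : ℕ) = k + 1 ∧ i' < k ∧
      f k' < f k ∧ f k < f i ∧ f i < f i' := by
  constructor
  · rintro ⟨l₁, l₂, l₃, x, y, z, w, hl, hwz, hzx, hxy⟩
    have hn := congrArg length hl
    simp only [length_ofFn, length_append, length_cons] at hn
    have hget (j : ℕ) (hj : j < n) :
        (l₁ ++ x :: y :: (l₂ ++ z :: w :: l₃))[j]? = some (f ⟨j, hj⟩) := by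
      rw [← hl, List.getElem?_ofFn, dif_pos hj]
    have hx : x = f ⟨l₁.length, by omega⟩ := by simpa using hget l₁.length (by omega)
    have hy : y = f ⟨l₁.length + 1, by omega⟩ := by simpa using hget (l₁.length + 1) (by omega)
    have hz : z = f ⟨l₁.length + (l₂.length + 2), by omega⟩ := by
      simpa using hget (l₁.length + (l₂.length + 2)) (by omega)
    have hw : w = f ⟨l₁.length + (l₂.length + 3), by omega⟩ := by
      simpa using hget (l₁.length + (l₂.length + 3)) (by omega)
    subst hx hy hz hw
    exact ⟨_, _, _, _, rfl, rfl, Fin.lt_def.2 (by simp), hwz, hzx, hxy⟩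
  · rintro ⟨i, i', k, k', hi', hk', hik, hwz, hzx, hxy⟩
    have hik' : (i : ℕ) + 2 ≤ k := by rw [Fin.lt_def] at hik; omega
    have hk : (k : ℕ) + 1 < (ofFn f).length := by rw [length_ofFn, ← hk']; exact k'.isLt
    refine ⟨_, _, _, _, _, _, _, eq_take_append_cons_cons_append_cons_cons hik' hk, ?_⟩
    simp only [List.getElem_ofFn, ← hi', ← hk', Fin.eta]
    exact ⟨hwz, hzx, hxy⟩

end List

namespace Finset

open List

section Arrangements

variable {α : Type*}

def arrangements (s : Finset α) : Finset (List α) :=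
  ⟨s.val.lists, Multiset.lists_nodup_finset s⟩

variable {s : Finset α} {a x : α} {l t : List α}

theorem mem_arrangements : l ∈ s.arrangements ↔ (l : Multiset α) = s.val := by
  simp [arrangements, eq_comm]

theorem arrangements_empty : (∅ : Finset α).arrangements = {[]} := by
  ext l
  simp [mem_arrangements]

theorem cons_mem_arrangements [DecidableEq α] :
    a :: t ∈ s.arrangements ↔ a ∈ s ∧ t ∈ (s.erase a).arrangements := by
  simp only [mem_arrangements, erase_val, ← Multiset.cons_coe]
  constructor
  · intro h
    refine ⟨?_, by rw [← h, Multiset.erase_cons_head]⟩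
    rw [← mem_val, ← h]
    exact Multiset.mem_cons_self a _
  · rintro ⟨ha, h⟩
    rw [h, Multiset.cons_erase ha]

theorem mem_of_mem_arrangements (hl : l ∈ s.arrangements) : x ∈ l ↔ x ∈ s := by
  rw [← Multiset.mem_coe, mem_arrangements.1 hl, mem_val]

theorem nodup_of_mem_arrangements (hl : l ∈ s.arrangements) : l.Nodup := by
  rw [← Multiset.coe_nodup, mem_arrangements.1 hl]
  exact s.nodup

theorem ne_nil_of_mem_arrangements (hl : l ∈ s.arrangements) (hs : s.Nonempty) : l ≠ [] := by
  rintro rfl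
  exact hs.ne_empty (val_eq_zero.1 (mem_arrangements.1 hl).symm)

theorem filter_mem_arrangements (hl : l ∈ s.arrangements) (p : α → Prop) [DecidablePred p] :
    l.filter (p ·) ∈ (s.filter p).arrangements := by
  rw [mem_arrangements, filter_val, ← mem_arrangements.1 hl, Multiset.filter_coe]

theorem card_filter_arrangements [DecidableEq α] (hs : s.Nonempty) (P : List α → Prop)
    [DecidablePred P] :
    #{l ∈ s.arrangements | P l} = ∑ a ∈ s, #{t ∈ (s.erase a).arrangements | P (a :: t)} := by
  have hsplit : {l ∈ s.arrangements | P l} = s.biUnion fun a =>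
      {t ∈ (s.erase a).arrangements | P (a :: t)}.map ⟨(a :: ·), cons_injective⟩ := by
    ext l
    cases l with
    | nil => simpa using fun h _ => ne_nil_of_mem_arrangements h hs rfl
    | cons b t => simp [cons_mem_arrangements, and_assoc]
  rw [hsplit, card_biUnion]
  · simp
  · intro a _ b _ hab
    simp only [disjoint_left, mem_map, Function.Embedding.coeFn_mk]
    rintro _ ⟨t, -, rfl⟩ ⟨t', -, h⟩
    exact hab (cons_eq_cons.1 h).1.symm

end Arrangements

section Counting

open scoped Classical

variable {α : Type*} [LinearOrder α] {s u : Finset α} {a : α}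

theorem sum_comp_card_filter_lt {M : Type*} [AddCommMonoid M] (s : Finset α) (g : ℕ → M) :
    ∑ a ∈ s, g #{x ∈ s | a < x} = ∑ j ∈ range #s, g j := by
  induction s using Finset.induction_on_min with
  | empty => simp
  | insert a s ha ih =>
    have has : a ∉ s := fun h => (ha a h).false
    rw [sum_insert has, card_insert_of_notMem has, sum_range_succ, add_comm, filter_insert,
      if_neg (lt_irrefl a), filter_true_of_mem ha, ← ih]
    congr 1
    refine sum_congr rfl fun b hb => ?_
    rw [filter_insert, if_neg (ha b hb).not_gt]

theorem card_filter_arrangements_eq_sum_range {P : List α → Prop} [DecidablePred P]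
    (hs : s.Nonempty) (g : ℕ → ℕ)
    (hg : ∀ a ∈ s, #{t ∈ (s.erase a).arrangements | P (a :: t)} = g #{x ∈ s | a < x}) :
    #{l ∈ s.arrangements | P l} = ∑ j ∈ range #s, g j := by
  rw [card_filter_arrangements hs, sum_congr rfl hg, sum_comp_card_filter_lt]

theorem card_filter_lt_eq_zero_iff : #{x ∈ s | a < x} = 0 ↔ ∀ x ∈ s.erase a, x < a := by
  simp only [card_eq_zero, filter_eq_empty_iff, not_lt, mem_erase, and_imp]
  exact ⟨fun h x hxa hx => (h hx).lt_of_ne hxa, fun h x hx =>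
    (eq_or_ne x a).elim (fun hxa => hxa.le) fun hxa => (h x hxa hx).le⟩

theorem card_filter_lt_eq_card_sub_one_iff (ha : a ∈ s) :
    #{x ∈ s | a < x} = #s - 1 ↔ ∀ x ∈ s.erase a, a < x := by
  have hsub : {x ∈ s | a < x} ⊆ s.erase a := fun x hx => by
    rw [mem_filter] at hx
    exact mem_erase.2 ⟨hx.2.ne', hx.1⟩
  rw [← card_erase_of_mem ha]
  refine ⟨fun h x hx => (mem_filter.1 (eq_of_subset_of_card_le hsub h.ge ▸ hx)).2, fun h => ?_⟩
  exact congrArg card (hsub.antisymm fun x hx => mem_filter.2 ⟨mem_of_mem_erase hx, h x hx⟩)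

theorem card_filter_cons_arrangements {P : List α → Prop} [DecidablePred P]
    (hP : ∀ t, ((∀ x ∈ t, a < x) ∨ ∀ x ∈ t, x < a) → (P (a :: t) ↔ P t))
    (ha : (∀ x ∈ u, a < x) ∨ ∀ x ∈ u, x < a) :
    #{t ∈ u.arrangements | P (a :: t)} = #{t ∈ u.arrangements | P t} := by
  refine congrArg card (filter_congr fun t ht => hP t ?_)
  simpa only [mem_of_mem_arrangements ht] using ha

theorem sum_range_ite_zero_or_last {M : Type*} [AddCommMonoid M] (n : ℕ) (c : M) (g : ℕ → M) :
    ∑ j ∈ range (n + 2), (if j = 0 ∨ j = n + 1 then c else g j) =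
      c + ∑ i ∈ range n, g (i + 1) + c := by
  rw [sum_range_succ, sum_range_succ', add_comm c]
  simp only [true_or, or_true, if_true, add_eq_zero, one_ne_zero, and_false, false_or,
    add_left_inj]
  congr 2
  exact sum_congr rfl fun i hi => if_neg (mem_range.1 hi).ne

theorem sum_range_ite_two_pow (n : ℕ) :
    ∑ j ∈ range (n + 2), (if j = 0 ∨ j = n + 1 then n * 2 ^ (n - 1) + 1 else 2 ^ (j - 1)) =
      (n + 1) * 2 ^ n + 1 := by
  have hgeom : ∑ i ∈ range n, 2 ^ i + 1 = 2 ^ n := by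
    have h := geom_sum_mul_add 1 n
    norm_num at h
    exact h
  rw [sum_range_ite_zero_or_last]
  simp only [add_tsub_cancel_right]
  rcases n with _ | n
  · rfl
  · simp only [add_tsub_cancel_right, pow_succ] at hgeom ⊢
    nlinarith

theorem card_filter_extremalHeads (s : Finset α) :
    #{l ∈ s.arrangements | l.ExtremalHeads} = 2 ^ (#s - 1) := by
  induction s using Finset.strongInduction with
  | H s ih =>
  rcases s.eq_empty_or_nonempty with rfl | hs
  · rw [arrangements_empty, filter_singleton, if_pos extremalHeads_nil]
    rfl
  refine (card_filter_arrangements_eq_sum_range hs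
    (fun j => if j = 0 ∨ j = #s - 1 then 2 ^ (#s - 2) else 0) fun a ha => ?_).trans ?_
  · split_ifs with h <;>
      rw [card_filter_lt_eq_zero_iff, card_filter_lt_eq_card_sub_one_iff ha, or_comm] at h
    · rw [card_filter_cons_arrangements (fun t => extremalHeads_cons_iff) h,
        ih _ (erase_ssubset ha), card_erase_of_mem ha, Nat.sub_sub]
    · refine card_eq_zero.2 (filter_eq_empty_iff.2 fun t ht hEH => h ?_)
      simpa only [mem_of_mem_arrangements ht] using hEH.1
  obtain ⟨n, hn⟩ := Nat.exists_eq_add_one_of_ne_zero hs.card_ne_zero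
  rcases n with _ | n
  · simp [hn]
  · simp only [hn, Nat.reduceSubDiff, add_tsub_cancel_right, sum_range_ite_zero_or_last,
      sum_const_zero, add_zero, pow_succ]
    ring

theorem val_eq_filter_lt_add_filter_gt (ha : a ∉ u) :
    u.val = {x ∈ u | a < x}.val + {x ∈ u | x < a}.val := by
  rw [filter_val, filter_val]
  conv_lhs => rw [← Multiset.filter_add_not (p := (a < ·)) u.val]
  congr 1
  refine Multiset.filter_congr fun x hx => ?_
  rw [not_lt, (ne_of_mem_of_not_mem hx ha).le_iff_lt]

theorem card_filter_cons_arrangements_avoids213And3421 (ha : a ∉ u) (hB : ∃ x ∈ u, a < x)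
    (hS : ∃ x ∈ u, x < a) :
    #{t ∈ u.arrangements | (a :: t).Avoids213And3421} =
      #{M ∈ {x ∈ u | a < x}.arrangements | M.ExtremalHeads} := by
  set B := {x ∈ u | a < x}
  set S := {x ∈ u | x < a}
  have hB' : B.Nonempty := let ⟨x, hx, hax⟩ := hB; ⟨x, mem_filter.2 ⟨hx, hax⟩⟩
  have hS' : S.Nonempty := let ⟨x, hx, hxa⟩ := hS; ⟨x, mem_filter.2 ⟨hx, hxa⟩⟩
  have key {M L} (hM : M ∈ B.arrangements) (hL : L ∈ S.arrangements) :
      (a :: (M ++ L)).Avoids213And3421 ↔ L.Pairwise (· ≤ ·) ∧ M.ExtremalHeads :=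
    avoids213And3421_cons_append_iff (nodup_of_mem_arrangements hM)
      (ne_nil_of_mem_arrangements hM hB') (ne_nil_of_mem_arrangements hL hS')
      (fun x hx => (mem_filter.1 ((mem_of_mem_arrangements hM).1 hx)).2)
      (fun x hx => (mem_filter.1 ((mem_of_mem_arrangements hL).1 hx)).2)
  have himage : {t ∈ u.arrangements | (a :: t).Avoids213And3421} =
      {M ∈ B.arrangements | M.ExtremalHeads}.image (· ++ S.sort) := by
    ext t
    simp only [mem_filter, mem_image]
    constructor
    · rintro ⟨ht, h⟩
      have hsplit := eq_filter_lt_append_filter_gt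
        (fun hat => ha ((mem_of_mem_arrangements ht).1 hat))
        fun h' => h.1 (has213_cons_iff.2 (Or.inr h'))
      have hM := filter_mem_arrangements ht (a < ·)
      have hL := filter_mem_arrangements ht (· < a)
      rw [hsplit, key hM hL] at h
      refine ⟨_, ⟨hM, h.2⟩, ?_⟩
      conv_rhs => rw [hsplit]
      congr 1
      exact Perm.eq_of_pairwise' (pairwise_sort _ _) h.1
        (Multiset.coe_eq_coe.1 ((sort_eq _ _).trans (mem_arrangements.1 hL).symm))
    · rintro ⟨M, ⟨hM, hEH⟩, rfl⟩
      have hL : S.sort ∈ S.arrangements := mem_arrangements.2 (sort_eq _ _)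
      refine ⟨mem_arrangements.2 ?_, (key hM hL).2 ⟨pairwise_sort _ _, hEH⟩⟩
      rw [← Multiset.coe_add, mem_arrangements.1 hM, sort_eq, val_eq_filter_lt_add_filter_gt ha]
  rw [himage, card_image_of_injective _ (append_left_injective _)]

theorem card_filter_avoids213And3421 (s : Finset α) :
    #{l ∈ s.arrangements | l.Avoids213And3421} = (#s - 1) * 2 ^ (#s - 2) + 1 := by
  induction s using Finset.strongInduction with
  | H s ih =>
  rcases s.eq_empty_or_nonempty with rfl | hs
  · rw [arrangements_empty, filter_singleton, if_pos Pairwise.nil.avoids213And3421]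
    rfl
  refine (card_filter_arrangements_eq_sum_range hs (fun j => if j = 0 ∨ j = #s - 1
    then (#s - 2) * 2 ^ (#s - 3) + 1 else 2 ^ (j - 1)) fun a ha => ?_).trans ?_
  · split_ifs with h <;>
      rw [card_filter_lt_eq_zero_iff, card_filter_lt_eq_card_sub_one_iff ha, or_comm] at h
    · rw [card_filter_cons_arrangements (fun t => avoids213And3421_cons_iff) h,
        ih _ (erase_ssubset ha), card_erase_of_mem ha, Nat.sub_sub, Nat.sub_sub]
    · push Not at h
      obtain ⟨⟨x, hx, hxa⟩, ⟨y, hy, hay⟩⟩ := h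
      rw [card_filter_cons_arrangements_avoids213And3421 (notMem_erase a s)
        ⟨y, hy, hay.lt_of_ne' (ne_of_mem_erase hy)⟩ ⟨x, hx, hxa.lt_of_ne (ne_of_mem_erase hx)⟩,
        card_filter_extremalHeads, filter_erase, erase_eq_of_notMem (by simp)]
  obtain ⟨n, hn⟩ := Nat.exists_eq_add_one_of_ne_zero hs.card_ne_zero
  rcases n with _ | n
  · simp [hn]
  · simpa only [hn, Nat.reduceSubDiff, add_tsub_cancel_right] using sum_range_ite_two_pow n

end Counting

end Finset

open Finset List

theorem ofFn_mem_arrangements_univ {n : ℕ} (π : Equiv.Perm (Fin n)) :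
    ofFn π ∈ (univ : Finset (Fin n)).arrangements := by
  rw [mem_arrangements, ← Fin.univ_val_map, Multiset.map_univ_val_equiv]

theorem exists_perm_ofFn_eq {n : ℕ} {l : List (Fin n)}
    (hl : l ∈ (univ : Finset (Fin n)).arrangements) : ∃ π : Equiv.Perm (Fin n), ofFn π = l := by
  have hlen : l.length = n := by simpa using congrArg Multiset.card (mem_arrangements.1 hl)
  let e := Nodup.getEquivOfForallMemList l (nodup_of_mem_arrangements hl) fun x =>
    (mem_of_mem_arrangements hl).2 (mem_univ x)
  refine ⟨(finCongr hlen.symm).trans e, ext_getElem (by simp [hlen]) fun i _ _ => ?_⟩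
  simp [e]

open scoped Classical in
theorem natCard_perm_eq_card_filter_arrangements {n : ℕ} (P : List (Fin n) → Prop) :
    Nat.card {π : Equiv.Perm (Fin n) // P (ofFn π)} =
      #{l ∈ (univ : Finset (Fin n)).arrangements | P l} := by
  rw [Nat.card_eq_fintype_card, Fintype.card_subtype]
  refine card_bij (fun π _ => ofFn π) (fun π hπ => ?_) (fun π₁ _ π₂ _ h => ?_) fun l hl => ?_
  · exact Finset.mem_filter.2 ⟨ofFn_mem_arrangements_univ π, (Finset.mem_filter.1 hπ).2⟩
  · exact Equiv.ext (congrFun (ofFn_injective h))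
  · obtain ⟨π, rfl⟩ := exists_perm_ofFn_eq (Finset.mem_filter.1 hl).1
    exact ⟨π, Finset.mem_filter.2 ⟨mem_univ π, (Finset.mem_filter.1 hl).2⟩, rfl⟩

theorem stmt14_general (n : ℕ) :
    Nat.card {π : Equiv.Perm (Fin n) // ¬ Contains213 π ∧ ¬ Contains34'21 π}
      = (n - 1) * 2 ^ (n - 2) + 1 := by
  classical
  have hπ (π : Equiv.Perm (Fin n)) :
      (¬ Contains213 π ∧ ¬ Contains34'21 π) ↔ (ofFn π).Avoids213And3421 := by
    rw [Avoids213And3421, has213_ofFn_iff, has3421_ofFn_iff]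
    rfl
  rw [Nat.card_congr (Equiv.subtypeEquivRight hπ), natCard_perm_eq_card_filter_arrangements,
    card_filter_avoids213And3421, card_univ, Fintype.card_fin]

theorem stmt14 (n : ℕ) (hn : 1 ≤ n) :
    Nat.card {π : Equiv.Perm (Fin n) // ¬ Contains213 π ∧ ¬ Contains34'21 π}
      = (n - 1) * 2 ^ (n - 2) + 1 :=
  stmt14_general n
end

section
/- For all n, a permutation π ∈ S_n avoids both 2-1-3 and 34-21 if and only if it avoids both 2-1-3 and the classical pattern 3-4-2-1. -/
/-- `π` contains the classical pattern 3-4-2-1. -/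
def Contains3421 {n : ℕ} (π : Equiv.Perm (Fin n)) : Prop :=
  ∃ i j k l : Fin n, i < j ∧ j < k ∧ k < l ∧ π l < π k ∧ π k < π i ∧ π i < π j

/-!
In a 2-1-3-avoiding permutation, once a value below `π i` occurs to the right of `i`, every
later value stays below `π i`. Hence in an occurrence `i j k l` of 3-4-2-1 the entries from `k`
to `l` all lie below `π i`, and since `π l < π k` some adjacent descent among them is a 21
lying below `π i`. Likewise `π (i + 1) < π i` would make `i, i + 1, j` a 2-1-3, so `i, i + 1`
is an adjacent 34 above it.
-/

theorem Fin.exists_descent_of_lt {n : ℕ} {α : Type*} [LinearOrder α] {f : Fin n → α}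
    {k l : Fin n} (hkl : k ≤ l) (hf : f l < f k) :
    ∃ m m' : Fin n, (m' : ℕ) = m + 1 ∧ k ≤ m ∧ m' ≤ l ∧ f m' < f m := by
  obtain ⟨l, hl⟩ := l
  replace hkl : (k : ℕ) ≤ l := hkl
  induction l, hkl using Nat.le_induction with
  | base => exact absurd hf (lt_irrefl _)
  | succ l hkl ih =>
    by_cases hfl : f ⟨l, by omega⟩ < f k
    · obtain ⟨m, m', hm', hkm, hml, hdesc⟩ := ih (by omega) hfl
      exact ⟨m, m', hm', hkm, hml.trans (Fin.le_def.2 (by simp)), hdesc⟩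
    · exact ⟨⟨l, by omega⟩, ⟨l + 1, hl⟩, rfl, Fin.le_def.2 hkl, le_rfl,
        hf.trans_le (not_lt.1 hfl)⟩

section AvoidsTwoOneThree

variable {n : ℕ} {π : Equiv.Perm (Fin n)}

theorem apply_lt_of_not_contains213 (h213 : ¬ Contains213 π) {i j m : Fin n} (hij : i < j)
    (hjm : j ≤ m) (hj : π j < π i) : π m < π i := by
  rcases hjm.eq_or_lt with rfl | hjm
  · exact hj
  by_contra! hm
  have hne : π i ≠ π m := π.injective.ne (hij.trans hjm).ne
  exact h213 ⟨i, j, m, hij, hjm, hj, hm.lt_of_ne hne⟩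

theorem apply_lt_apply_succ_of_not_contains213 (h213 : ¬ Contains213 π) {i i' j : Fin n}
    (hi' : (i' : ℕ) = i + 1) (hij : i < j) (hj : π i < π j) : π i < π i' := by
  by_contra! hi
  have hii' : i < i' := Fin.lt_def.2 (by omega)
  have hi'i : π i' < π i := hi.lt_of_ne (π.injective.ne hii'.ne')
  have hi'j : i' < j := by
    refine (Fin.le_def.2 (by omega)).lt_of_ne ?_
    rintro rfl
    exact hi'i.not_gt hj
  exact h213 ⟨i, i', j, hii', hi'j, hi'i, hj⟩

theorem Contains3421.contains34'21 (h213 : ¬ Contains213 π) (h : Contains3421 π) :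
    Contains34'21 π := by
  obtain ⟨i, j, k, l, hij, hjk, hkl, hlk, hki, hij'⟩ := h
  obtain ⟨m, m', hm', hkm, _, hdesc⟩ := Fin.exists_descent_of_lt hkl.le hlk
  have hmi : π m < π i := apply_lt_of_not_contains213 h213 (hij.trans hjk) hkm hki
  have hi'j : (i : ℕ) + 1 ≤ j := hij
  have hi' : (i : ℕ) + 1 < n := by omega
  have hasc := apply_lt_apply_succ_of_not_contains213 (i' := ⟨i + 1, hi'⟩) h213 rfl hij hij'
  have hi'm : (⟨i + 1, hi'⟩ : Fin n) < m := Fin.lt_def.2 (by simp only; omega)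
  exact ⟨i, ⟨i + 1, hi'⟩, m, m', rfl, hm', hi'm, hdesc, hmi, hasc⟩

end AvoidsTwoOneThree

theorem Contains34'21.contains3421 {n : ℕ} {π : Equiv.Perm (Fin n)} (h : Contains34'21 π) :
    Contains3421 π := by
  obtain ⟨i, i', k, k', hi', hk', hi'k, hk'k, hki, hii'⟩ := h
  exact ⟨i, i', k, k', Fin.lt_def.2 (by omega), hi'k, Fin.lt_def.2 (by omega), hk'k, hki, hii'⟩

theorem stmt15 (n : ℕ) (π : Equiv.Perm (Fin n)) :
    (¬ Contains213 π ∧ ¬ Contains34'21 π) ↔ (¬ Contains213 π ∧ ¬ Contains3421 π) :=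
  ⟨fun ⟨h213, h34'21⟩ => ⟨h213, fun h => h34'21 (h.contains34'21 h213)⟩,
    fun ⟨h213, h3421⟩ => ⟨h213, fun h => h3421 h.contains3421⟩⟩
end
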